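/- arXiv:quant-ph/0312164 — 14 statements merged into one kernel-verified Lean document; each statement's English description precedes it below -/
import Mathlib

section
/- For every prime power q, every integer μ with 0 ≤ μ and 2μ < q−1, the code C^(q,μ) ⊆ F^q is weakly self-dual, i.e. C^(q,μ) ⊆ (C^(q,μ))⊥ with respect to the Euclidean inner product. -/
/-- Lemma 1 (first part): for a finite field `F` with `q` elements, a primitive
element `α`, and `0 ≤ μ` with `2μ < q - 1`, the code `C^(q,μ)` spanned by the
vectors `G_0, …, G_μ` (where `G_i` has `l`-th coordinate `α^(i·l)` for
`0 ≤ l ≤ q-2` and last coordinate `1` if `i = 0`, else `0`) is weakly self-dual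
with respect to the Euclidean inner product. -/
theorem weakly_self_dual_C_q_mu
    (q : ℕ) (hq : IsPrimePow q)
    (F : Type*) [Field F] [Fintype F] (hF : Fintype.card F = q)
    (α : Fˣ) (hα : ∀ x : Fˣ, x ∈ Subgroup.zpowers α)
    (μ : ℕ) (hμ : 2 * μ < q - 1)
    (G : ℕ → Fin q → F)
    (hG : ∀ i : ℕ, ∀ l : Fin q, G i l =
      if (l : ℕ) = q - 1 then (if i = 0 then 1 else 0)
      else (α : F) ^ (i * (l : ℕ)))
    (C : Submodule F (Fin q → F))
    (hC : C = Submodule.span F {g : Fin q → F | ∃ i ≤ μ, g = G i}) :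
    ∀ v ∈ C, ∀ w ∈ C, ∑ l, v l * w l = 0 := by
  have hq1 : 1 ≤ q := hq.one_lt.le
  have hcard : Nat.card Fˣ = q - 1 := by
    rw [Nat.card_units, Nat.card_eq_fintype_card, hF]
  have hord : orderOf α = q - 1 := by
    rw [orderOf_eq_card_of_forall_mem_zpowers hα, hcard]
  -- key computation on the generators
  have key : ∀ i ≤ μ, ∀ j ≤ μ, ∑ l, G i l * G j l = 0 := by
    intro i hi j hj
    have hstep : ∀ l : Fin q, G i l * G j l =
        (fun l : ℕ => if l = q - 1 then
            (if i = 0 then (1:F) else 0) * (if j = 0 then 1 else 0)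
          else ((α : F) ^ (i + j)) ^ l) (l : ℕ) := by
      intro l
      simp only [hG]
      by_cases h : (l : ℕ) = q - 1
      · simp [h]
      · simp only [h, if_false]
        rw [← pow_add, ← Nat.add_mul, pow_mul]
    rw [Finset.sum_congr rfl (fun l _ => hstep l),
      Fin.sum_univ_eq_sum_range (fun l : ℕ => if l = q - 1 then
            (if i = 0 then (1:F) else 0) * (if j = 0 then 1 else 0)
          else ((α : F) ^ (i + j)) ^ l) q]
    have hqe : q = (q - 1) + 1 := (Nat.succ_pred_eq_of_pos hq.pos).symm
    rw [show (Finset.range q) = Finset.range ((q-1)+1) from by rw [← hqe],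
      Finset.sum_range_succ]
    simp only [if_pos rfl]
    have hrest : ∀ l ∈ Finset.range (q - 1),
        (if l = q - 1 then (if i = 0 then (1:F) else 0) * (if j = 0 then 1 else 0)
          else ((α : F) ^ (i + j)) ^ l) = ((α : F) ^ (i + j)) ^ l := by
      intro l hl
      rw [if_neg (Nat.ne_of_lt (Finset.mem_range.mp hl))]
    rw [Finset.sum_congr rfl hrest]
    by_cases h0 : i + j = 0
    · obtain ⟨hi0, hj0⟩ := Nat.add_eq_zero.mp h0
      subst hi0; subst hj0
      have hcast : ((q - 1 : ℕ) : F) = -1 := by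
        rw [Nat.cast_sub hq1, Nat.cast_one, ← hF, FiniteField.cast_card_eq_zero]
        ring
      simp [hcast]
    · -- geometric sum vanishes
      have hlt : i + j < q - 1 := lt_of_le_of_lt
        (by omega : i + j ≤ 2 * μ) hμ
      have hne : (α : F) ^ (i + j) ≠ 1 := by
        intro h
        have hu : α ^ (i + j) = 1 := by
          ext; push_cast; simpa using h
        have := orderOf_dvd_of_pow_eq_one hu
        rw [hord] at this
        exact absurd (Nat.le_of_dvd (Nat.pos_of_ne_zero h0) this) (not_le.mpr hlt)
      have hpow : ((α : F) ^ (i + j)) ^ (q - 1) = 1 := by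
        have hu : α ^ (q - 1) = 1 := by rw [← hcard]; exact pow_card_eq_one'
        rw [← pow_mul, mul_comm, pow_mul]
        have : (α : F) ^ (q - 1) = 1 := by
          have := congrArg (Units.val) hu
          push_cast at this; simpa using this
        rw [this, one_pow]
      rw [geom_sum_eq hne, hpow, sub_self, zero_div, zero_add]
      have : i ≠ 0 ∨ j ≠ 0 := by omega
      rcases this with h | h
      · simp [h]
      · simp [h]
  subst hC
  intro v hv w hw
  induction hv, hw using Submodule.span_induction₂ with
  | mem_mem x y hx hy =>
    obtain ⟨i, hi, rfl⟩ := hx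
    obtain ⟨j, hj, rfl⟩ := hy
    exact key i hi j hj
  | zero_left y hy => simp
  | zero_right x hx => simp
  | add_left x y z hx hy hz h1 h2 =>
    simp only [Pi.add_apply, add_mul, Finset.sum_add_distrib, h1, h2, add_zero]
  | add_right x y z hx hy hz h1 h2 =>
    simp only [Pi.add_apply, mul_add, Finset.sum_add_distrib, h1, h2, add_zero]
  | smul_left r x y hx hy h =>
    simp only [Pi.smul_apply, smul_eq_mul, mul_assoc, ← Finset.mul_sum, h, mul_zero]
  | smul_right r x y hx hy h =>
    simp only [Pi.smul_apply, smul_eq_mul, mul_left_comm, ← Finset.mul_sum, h, mul_zero]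
end

section
/- For every prime power q and every integer μ with 0 ≤ μ ≤ q−2, the code C^(q²,μ) ⊆ F^{q²} is Hermitian self-orthogonal, i.e. C^(q²,μ) ⊆ (C^(q²,μ))∗ with respect to the Hermitian inner product on F^{q²}. -/
/-- Lemma 2 (first part): for a finite field `F` with `q²` elements, a primitive
element `α`, and `0 ≤ μ ≤ q - 2`, the code `C^(q²,μ)` spanned by the vectors
`G_0, …, G_μ` (where `G_i` has `l`-th coordinate `α^(i·l)` for `0 ≤ l ≤ q²-2`
and last coordinate `1` if `i = 0`, else `0`) is self-orthogonal with respect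
to the Hermitian inner product `v ∗ w = ∑ i, v i * (w i)^q`. -/
theorem hermitian_self_orthogonal_C_q2_mu
    (q : ℕ) (hq : IsPrimePow q)
    (F : Type*) [Field F] [Fintype F] (hF : Fintype.card F = q ^ 2)
    (α : Fˣ) (hα : ∀ x : Fˣ, x ∈ Subgroup.zpowers α)
    (μ : ℕ) (hμ : μ ≤ q - 2)
    (G : ℕ → Fin (q ^ 2) → F)
    (hG : ∀ i : ℕ, ∀ l : Fin (q ^ 2), G i l =
      if (l : ℕ) = q ^ 2 - 1 then (if i = 0 then 1 else 0)
      else (α : F) ^ (i * (l : ℕ)))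
    (C : Submodule F (Fin (q ^ 2) → F))
    (hC : C = Submodule.span F {g : Fin (q ^ 2) → F | ∃ i ≤ μ, g = G i}) :
    ∀ v ∈ C, ∀ w ∈ C, ∑ l, v l * (w l) ^ q = 0 := by
  have hq2 : 2 ≤ q := hq.two_le
  have hq0 : q ≠ 0 := by omega
  -- characteristic setup: q is a power of the characteristic
  obtain ⟨p₀, k, hp₀, hk, hqeq⟩ := hq
  have hp₀' : p₀.Prime := Nat.prime_iff.mpr hp₀
  have hcharp : CharP F (ringChar F) := ringChar.charP F
  have hp : (ringChar F).Prime := CharP.char_is_prime F (ringChar F)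
  obtain ⟨n, -, hcard⟩ := FiniteField.card F (ringChar F)
  have hppow : (ringChar F) ^ (n : ℕ) = p₀ ^ (2 * k) := by
    rw [← hcard, hF, ← hqeq, ← pow_mul, mul_comm k 2]
  have hpp : ringChar F = p₀ := by
    have hd : ringChar F ∣ p₀ ^ (2 * k) := hppow ▸ dvd_pow_self _ n.pos.ne'
    exact (Nat.prime_dvd_prime_iff_eq hp hp₀').mp (hp.dvd_of_dvd_pow hd)
  haveI : Fact (ringChar F).Prime := ⟨hp⟩
  have hfrob : ∀ a b : F, (a + b) ^ q = a ^ q + b ^ q := by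
    intro a b
    rw [← hqeq, ← hpp]
    exact add_pow_char_pow a b (ringChar F) k
  -- order of α
  set m := q ^ 2 - 1 with hm_def
  have hm : q ^ 2 = m + 1 := by
    have : 1 ≤ q ^ 2 := Nat.one_le_pow _ _ (by omega)
    omega
  have hcardU : Nat.card Fˣ = m := by
    rw [Nat.card_units, Nat.card_eq_fintype_card, hF]
  have hαord : orderOf α = m := by
    rw [orderOf_eq_card_of_forall_mem_zpowers hα, hcardU]
  have hαm : (α : F) ^ m = 1 := by
    have h : α ^ m = 1 := by rw [← hαord]; exact pow_orderOf_eq_one α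
    have := congrArg Units.val h
    simpa using this
  have hne : ∀ t : ℕ, 0 < t → t < m → (α : F) ^ t ≠ 1 := by
    intro t ht htm h1
    have hu : α ^ t = 1 := Units.ext (by simpa using h1)
    have hdvd := orderOf_dvd_of_pow_eq_one hu
    rw [hαord] at hdvd
    have := Nat.eq_zero_of_dvd_of_lt hdvd htm
    omega
  -- key computation on generators
  have key : ∀ i ≤ μ, ∀ j ≤ μ, ∑ l : Fin (q ^ 2), G i l * (G j l) ^ q = 0 := by
    intro i hi j hj
    have hi' : i + 2 ≤ q := by omega
    have hj' : j + 2 ≤ q := by omega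
    have hsum : ∑ l : Fin (q ^ 2), G i l * (G j l) ^ q
        = ∑ l ∈ Finset.range (q ^ 2),
            ((if l = m then (if i = 0 then (1:F) else 0) else (α : F) ^ (i * l)) *
             (if l = m then (if j = 0 then (1:F) else 0) else (α : F) ^ (j * l)) ^ q) := by
      rw [← Fin.sum_univ_eq_sum_range]
      exact Finset.sum_congr rfl fun l _ => by rw [hG, hG]
    rw [hsum, hm, Finset.sum_range_succ, if_pos rfl, if_pos rfl]
    have hrest : ∀ l ∈ Finset.range m,
        ((if l = m then (if i = 0 then (1:F) else 0) else (α : F) ^ (i * l)) *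
         (if l = m then (if j = 0 then (1:F) else 0) else (α : F) ^ (j * l)) ^ q)
        = ((α : F) ^ (i + j * q)) ^ l := by
      intro l hl
      have hlm : l ≠ m := (Finset.mem_range.mp hl).ne
      rw [if_neg hlm, if_neg hlm, ← pow_mul, ← pow_add, ← pow_mul]
      ring_nf
    rw [Finset.sum_congr rfl hrest]
    by_cases hij : i = 0 ∧ j = 0
    · obtain ⟨rfl, rfl⟩ := hij
      have e1 : (if (0:ℕ) = 0 then (1:F) else 0) = 1 := rfl
      rw [e1, one_mul, one_pow]
      have e2 : ∀ l ∈ Finset.range m, ((α : F) ^ (0 + 0 * q)) ^ l = 1 := by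
        intro l _
        norm_num
      rw [Finset.sum_congr rfl e2, Finset.sum_const, Finset.card_range, nsmul_eq_mul,
        mul_one]
      have e3 : ((m : F) + 1) = ((q ^ 2 : ℕ) : F) := by rw [hm]; push_cast; ring
      rw [e3, ← hF]
      exact FiniteField.cast_card_eq_zero F
    · have htpos : 0 < i + j * q := by
        rcases Nat.eq_zero_or_pos i with rfl | hpos
        · have hj0 : j ≠ 0 := fun h => hij ⟨rfl, h⟩
          have : 0 < j * q := Nat.mul_pos (Nat.pos_of_ne_zero hj0) (by omega)
          omega
        · omega
      have htlt : i + j * q < m := by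
        have h1 : (j + 2) * q ≤ q * q := Nat.mul_le_mul_right q hj'
        have h2 : i + j * q + 1 < q * q := by nlinarith
        have h3 : q * q = m + 1 := by rw [← hm]; ring
        omega
      have hβ : (α : F) ^ (i + j * q) ≠ 1 := hne _ htpos htlt
      rw [geom_sum_eq hβ]
      have hnum : ((α : F) ^ (i + j * q)) ^ m = 1 := by
        rw [← pow_mul, mul_comm, pow_mul, hαm, one_pow]
      rw [hnum, sub_self, zero_div, zero_add]
      rcases Nat.eq_zero_or_pos i with rfl | hpos
      · have hj0 : j ≠ 0 := fun h => hij ⟨rfl, h⟩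
        rw [if_neg hj0, zero_pow hq0, mul_zero]
      · rw [if_neg (by omega : i ≠ 0), zero_mul]
  -- bilinear extension
  subst hC
  have H : ∀ i ≤ μ, ∀ w ∈ Submodule.span F {g : Fin (q ^ 2) → F | ∃ i ≤ μ, g = G i},
      ∑ l, G i l * (w l) ^ q = 0 := by
    intro i hi w hw
    induction hw using Submodule.span_induction with
    | mem x hx => obtain ⟨j, hj, rfl⟩ := hx; exact key i hi j hj
    | zero => simp only [Pi.zero_apply, zero_pow hq0, mul_zero, Finset.sum_const_zero]
    | add x y hx hy ihx ihy =>
      simp only [Pi.add_apply, hfrob, mul_add, Finset.sum_add_distrib, ihx, ihy, add_zero]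
    | smul a x hx ihx =>
      simp only [Pi.smul_apply, smul_eq_mul, mul_pow]
      have e : ∀ l, G i l * (a ^ q * x l ^ q) = a ^ q * (G i l * x l ^ q) := fun l => by ring
      simp_rw [e]
      rw [← Finset.mul_sum, ihx, mul_zero]
  intro v hv w hw
  induction hv using Submodule.span_induction with
  | mem x hx => obtain ⟨i, hi, rfl⟩ := hx; exact H i hi w hw
  | zero => simp only [Pi.zero_apply, zero_mul, Finset.sum_const_zero]
  | add x y hx hy ihx ihy =>
    simp only [Pi.add_apply, add_mul, Finset.sum_add_distrib, ihx, ihy, add_zero]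
  | smul a x hx ihx =>
    simp only [Pi.smul_apply, smul_eq_mul, mul_assoc]
    rw [← Finset.mul_sum, ihx, mul_zero]
end

section
/- For every prime power q and every integer μ with 0 ≤ μ ≤ q−2, the shortened code C_s^(q²,μ) ⊆ F^{q²−1} is Hermitian self-orthogonal, i.e. C_s^(q²,μ) ⊆ (C_s^(q²,μ))∗ with respect to the Hermitian inner product on F^{q²−1}. -/
/-- Lemma 2 (second part): for a finite field `F` with `q²` elements, a
primitive element `α`, and `0 ≤ μ ≤ q - 2`, the shortened code `C_s^(q²,μ)`
spanned by the vectors `H_1, …, H_μ` (where `H_i` has `l`-th coordinate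
`α^(i·l)` for `0 ≤ l ≤ q²-2`) is self-orthogonal with respect to the Hermitian
inner product `v ∗ w = ∑ i, v i * (w i)^q`. -/
theorem hermitian_self_orthogonal_Cs_q2_mu
    (q : ℕ) (hq : IsPrimePow q)
    (F : Type*) [Field F] [Fintype F] (hF : Fintype.card F = q ^ 2)
    (α : Fˣ) (hα : ∀ x : Fˣ, x ∈ Subgroup.zpowers α)
    (μ : ℕ) (hμ : μ ≤ q - 2)
    (H : ℕ → Fin (q ^ 2 - 1) → F)
    (hH : ∀ i : ℕ, ∀ l : Fin (q ^ 2 - 1), H i l = (α : F) ^ (i * (l : ℕ)))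
    (C : Submodule F (Fin (q ^ 2 - 1) → F))
    (hC : C = Submodule.span F {h : Fin (q ^ 2 - 1) → F | ∃ i, 1 ≤ i ∧ i ≤ μ ∧ h = H i}) :
    ∀ v ∈ C, ∀ w ∈ C, ∑ l, v l * (w l) ^ q = 0 := by
  classical
  obtain ⟨p, n, hp, hn, hpn⟩ := hq
  have hp' : p.Prime := hp.nat_prime
  have hq2 : 2 ≤ q := by
    calc 2 ≤ p := hp'.two_le
    _ ≤ p ^ n := Nat.le_self_pow hn.ne' p
    _ = q := hpn
  -- characteristic of F is p
  have hchar : CharP F p := by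
    haveI := ringChar.charP F
    obtain ⟨m, hrp, hcard⟩ := FiniteField.card F (ringChar F)
    have hd : p ∣ (ringChar F) ^ (m : ℕ) := by
      rw [← hcard, hF, ← hpn, ← pow_mul]
      exact dvd_pow_self p (by positivity)
    have : p = ringChar F := (Nat.prime_dvd_prime_iff_eq hp' hrp).mp (hp'.dvd_of_dvd_pow hd)
    rwa [this]
  haveI := hchar
  haveI : Fact p.Prime := ⟨hp'⟩
  have hfrob : ∀ a b : F, (a + b) ^ q = a ^ q + b ^ q := by
    intro a b; rw [← hpn]; exact add_pow_char_pow a b p n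
  -- order of α
  have hcardu : Fintype.card Fˣ = q ^ 2 - 1 := by rw [Fintype.card_units, hF]
  have hord : orderOf α = q ^ 2 - 1 := by
    rw [← hcardu, ← Nat.card_eq_fintype_card]; exact orderOf_eq_card_of_forall_mem_zpowers hα
  have hαpow : (α : F) ^ (q ^ 2 - 1) = 1 := by
    have h1 : α ^ (q ^ 2 - 1) = 1 := hord ▸ pow_orderOf_eq_one α
    rw [← Units.val_pow_eq_pow_val, h1, Units.val_one]
  -- key: generator-generator case
  have key : ∀ i j : ℕ, 1 ≤ i → i ≤ μ → 1 ≤ j → j ≤ μ →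
      ∑ l : Fin (q ^ 2 - 1), H i l * (H j l) ^ q = 0 := by
    intro i j hi1 hi2 hj1 hj2
    have hiq : i ≤ q - 2 := hi2.trans hμ
    have hjq : j ≤ q - 2 := hj2.trans hμ
    set k := i + j * q with hk
    have hk1 : 1 ≤ k := by omega
    have hk2 : k < q ^ 2 - 1 := by
      have hsq : q ^ 2 = q * q := sq q
      have h1 : j * q ≤ (q - 2) * q := Nat.mul_le_mul_right q hjq
      have h3 : (q - 2) * q = q * q - 2 * q := Nat.sub_mul q 2 q
      have h4 : 2 * q ≤ q * q := Nat.mul_le_mul_right q hq2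
      omega
    set β : F := (α : F) ^ k with hβ
    have hβpow : β ^ (q ^ 2 - 1) = 1 := by
      rw [hβ, ← pow_mul, mul_comm, pow_mul, hαpow, one_pow]
    have hβne : β ≠ 1 := by
      intro h
      have hu : α ^ k = 1 :=
        Units.ext (by rw [Units.val_pow_eq_pow_val, ← hβ, h, Units.val_one])
      have hdvd := orderOf_dvd_of_pow_eq_one hu
      rw [hord] at hdvd
      exact absurd (Nat.le_of_dvd (by omega) hdvd) (by omega)
    have hterm : ∀ l : Fin (q ^ 2 - 1), H i l * (H j l) ^ q = β ^ (l : ℕ) := by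
      intro l
      rw [hH i l, hH j l, ← pow_mul, ← pow_add, hβ, ← pow_mul]
      congr 1
      ring
    calc ∑ l : Fin (q ^ 2 - 1), H i l * (H j l) ^ q
        = ∑ l : Fin (q ^ 2 - 1), β ^ (l : ℕ) := Finset.sum_congr rfl fun l _ => hterm l
      _ = ∑ l ∈ Finset.range (q ^ 2 - 1), β ^ l := Fin.sum_univ_eq_sum_range _ _
      _ = (β ^ (q ^ 2 - 1) - 1) / (β - 1) := geom_sum_eq hβne _
      _ = 0 := by rw [hβpow, sub_self, zero_div]
  subst hC
  -- step 1: v a generator, w in the span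
  have step1 : ∀ i : ℕ, 1 ≤ i → i ≤ μ →
      ∀ w ∈ Submodule.span F {h : Fin (q ^ 2 - 1) → F | ∃ i, 1 ≤ i ∧ i ≤ μ ∧ h = H i},
      ∑ l, H i l * (w l) ^ q = 0 := by
    intro i hi1 hi2 w hw
    induction hw using Submodule.span_induction with
    | mem x hx =>
        obtain ⟨j, hj1, hj2, rfl⟩ := hx
        exact key i j hi1 hi2 hj1 hj2
    | zero => simp [zero_pow (show q ≠ 0 by omega)]
    | add x y _ _ hx hy =>
        simp only [Pi.add_apply, hfrob, mul_add, Finset.sum_add_distrib, hx, hy, add_zero]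
    | smul c x _ hx =>
        simp only [Pi.smul_apply, smul_eq_mul, mul_pow]
        have he : ∀ l : Fin (q ^ 2 - 1), H i l * (c ^ q * x l ^ q)
            = c ^ q * (H i l * x l ^ q) := fun l => by ring
        rw [Finset.sum_congr rfl fun l _ => he l, ← Finset.mul_sum, hx, mul_zero]
  intro v hv w hw
  induction hv using Submodule.span_induction with
  | mem x hx =>
      obtain ⟨i, hi1, hi2, rfl⟩ := hx
      exact step1 i hi1 hi2 w hw
  | zero => simp
  | add x y _ _ hx hy =>
      simp only [Pi.add_apply, add_mul, Finset.sum_add_distrib, hx, hy, add_zero]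
  | smul c x _ hx =>
      simp only [Pi.smul_apply, smul_eq_mul, mul_assoc, ← Finset.mul_sum, hx, mul_zero]
end

section
/- Let C ⊆ F^n be an F-linear code that is Hermitian self-orthogonal, let γ ∈ F satisfy γ^q ≠ γ, and define D = {(v,w) ∈ K^n × K^n : v + γ·w ∈ C}. Then D is symplectic self-orthogonal over K, i.e. for all (v,w), (v′,w′) ∈ D one has ∑_{i=1}^n (v_i w′_i − v′_i w_i) = 0. -/
/-- Corollary 1 (key step): let `F` be a finite field with `q²` elements and
`K = {x ∈ F : x^q = x}` its subfield with `q` elements.  If `C ⊆ F^n` is an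
`F`-linear code that is self-orthogonal with respect to the Hermitian inner
product `v ∗ w = ∑ i, v i * (w i)^q`, and `γ ∈ F` satisfies `γ^q ≠ γ`, then the
code `D = {(v,w) ∈ K^n × K^n : v + γ·w ∈ C}` is self-orthogonal with respect to
the symplectic inner product `∑ i, (v i * w' i - v' i * w i)`. -/
theorem symplectic_self_orthogonal_of_hermitian
    (q : ℕ) (hq : IsPrimePow q)
    (F : Type*) [Field F] [Fintype F] (hF : Fintype.card F = q ^ 2)
    (n : ℕ) (C : Submodule F (Fin n → F))
    (hC : ∀ c ∈ C, ∀ c' ∈ C, ∑ i, c i * (c' i) ^ q = 0)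
    (γ : F) (hγ : γ ^ q ≠ γ)
    (v w v' w' : Fin n → F)
    (hv : ∀ i, (v i) ^ q = v i) (hw : ∀ i, (w i) ^ q = w i)
    (hv' : ∀ i, (v' i) ^ q = v' i) (hw' : ∀ i, (w' i) ^ q = w' i)
    (hmem : (fun i => v i + γ * w i) ∈ C)
    (hmem' : (fun i => v' i + γ * w' i) ∈ C) :
    ∑ i, (v i * w' i - v' i * w i) = 0 := by
  -- the map x ↦ x^q is additive
  have hfrob : ∀ x y : F, (x + y) ^ q = x ^ q + y ^ q := by
    obtain ⟨p, k, hp, hk, rfl⟩ := hq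
    obtain ⟨r, hr⟩ := CharP.exists F
    obtain ⟨m, hrp, hcard⟩ := @FiniteField.card F _ _ r hr
    haveI : Fact r.Prime := ⟨hrp⟩
    have hpr : p = r := by
      have h1 : r ^ (m : ℕ) = p ^ (2 * k) := by
        rw [← hcard, hF, ← pow_mul, mul_comm]
      have : p ∣ r ^ (m : ℕ) := h1 ▸ dvd_pow_self p (by positivity)
      have := hp.nat_prime.dvd_of_dvd_pow this
      exact ((Nat.prime_dvd_prime_iff_eq hp.nat_prime hrp).mp this)
    subst hpr
    intro x y
    exact add_pow_char_pow x y p k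
  have hrw : ∀ i, (v' i + γ * w' i) ^ q = v' i + γ ^ q * w' i := by
    intro i; rw [hfrob, mul_pow, hv', hw']
  have hrw2 : ∀ i, (v i + γ * w i) ^ q = v i + γ ^ q * w i := by
    intro i; rw [hfrob, mul_pow, hv, hw]
  have h1 := hC _ hmem _ hmem'
  have h2 := hC _ hmem' _ hmem
  simp only [hrw, hrw2] at h1 h2
  have expand : ∀ a b a' b' : Fin n → F,
      (∑ i, (a i + γ * b i) * (a' i + γ ^ q * b' i)) =
      (∑ i, a i * a' i) + γ ^ q * (∑ i, a i * b' i) + γ * (∑ i, a' i * b i)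
        + γ * γ ^ q * (∑ i, b i * b' i) := by
    intro a b a' b'
    simp only [Finset.mul_sum, ← Finset.sum_add_distrib]
    exact Finset.sum_congr rfl fun i _ => by ring
  rw [expand] at h1 h2
  have key : (γ ^ q - γ) * (∑ i, (v i * w' i - v' i * w i)) = 0 := by
    rw [Finset.sum_sub_distrib]
    have hcomm : (∑ i, w i * w' i) = ∑ i, w' i * w i :=
      Finset.sum_congr rfl fun i _ => mul_comm _ _
    have hcomm2 : (∑ i, v i * v' i) = ∑ i, v' i * v i :=
      Finset.sum_congr rfl fun i _ => mul_comm _ _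
    linear_combination h1 - h2 - hcomm2 - γ * γ ^ q * hcomm
  have := mul_eq_zero.mp key
  rcases this with h | h
  · exact absurd (sub_eq_zero.mp h) hγ
  · exact h
end

section
/- Let K be a field and let C₁, C₂ ⊆ K^n be linear codes with C₂⊥ ⊆ C₁. Then the code C₁⊥ × C₂⊥ ⊆ K^n × K^n is symplectic self-orthogonal, i.e. for all v, v′ ∈ C₁⊥ and all w, w′ ∈ C₂⊥ one has ∑_{i=1}^n (v_i w′_i − v′_i w_i) = 0. -/
/-- Theorem 3 (CSS codes, key step): if `C₁, C₂ ⊆ K^n` are linear codes with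
`C₂⊥ ⊆ C₁`, then the code `C₁⊥ × C₂⊥ ⊆ K^n × K^n` is self-orthogonal with
respect to the symplectic inner product
`(v,w) ∗ (v',w') = ∑ i, (v i * w' i - v' i * w i)`. -/
theorem css_symplectic_self_orthogonal
    (K : Type*) [Field K] (n : ℕ)
    (C₁ C₂ : Submodule K (Fin n → K))
    (h : ∀ u : Fin n → K, (∀ c ∈ C₂, ∑ i, u i * c i = 0) → u ∈ C₁)
    (v v' : Fin n → K)
    (hv : ∀ c ∈ C₁, ∑ i, v i * c i = 0) (hv' : ∀ c ∈ C₁, ∑ i, v' i * c i = 0)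
    (w w' : Fin n → K)
    (hw : ∀ c ∈ C₂, ∑ i, w i * c i = 0) (hw' : ∀ c ∈ C₂, ∑ i, w' i * c i = 0) :
    ∑ i, (v i * w' i - v' i * w i) = 0 := by
  rw [Finset.sum_sub_distrib, hv w' (h w' hw'), hv' w (h w hw), sub_zero]
end

section
/- Let K be a finite field with q elements, let C ⊆ K^n × K^n be a K-linear subspace with dim_K C = n − k, and let d ≥ 1 be such that every nonzero element of the symplectic dual C∗ has symplectic weight at least d. If the puncture code P(C) contains a vector x of Hamming weight r ≥ 1, then there exists a K-linear subspace D ⊆ K^r × K^r such that D is symplectic self-orthogonal, dim_K D ≤ n − k, and every nonzero element of the symplectic dual D∗ has symplectic weight at least d. -/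
/-!
Let `e : Fin r → Fin n` enumerate the support of `x`. Restricting to the support and scaling the
first component by `x` is a linear map `K^n × K^n → K^r × K^r` that carries the `x`-weighted
symplectic form to the symplectic form, so it maps `C` onto a self-orthogonal code `D`. Its
adjoint extends `(v, w)` by zero and scales `w` by `x`; this is injective and preserves the
symplectic weight, so it carries a nonzero element of `D∗` to a nonzero element of `C∗` of the
same weight.
-/

/-- The symplectic inner product on `K^n × K^n`:
`(v,w) ∗ (v',w') = ∑ i, (v i * w' i - v' i * w i)`. -/
def sympIP {K : Type*} [Field K] {n : ℕ}
    (a b : (Fin n → K) × (Fin n → K)) : K :=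
  ∑ i, (a.1 i * b.2 i - b.1 i * a.2 i)

/-- The symplectic weight of `(v,w) ∈ K^n × K^n`: the number of indices `i`
with `(v i, w i) ≠ (0,0)`. -/
noncomputable def sympWeight {K : Type*} [Zero K] {n : ℕ}
    (a : (Fin n → K) × (Fin n → K)) : ℕ :=
  Set.ncard {i : Fin n | a.1 i ≠ 0 ∨ a.2 i ≠ 0}

open Function

theorem sympWeight_eq_zero_iff {M : Type*} [Zero M] {n : ℕ} (a : (Fin n → M) × (Fin n → M)) :
    sympWeight a = 0 ↔ a = 0 := by
  rw [sympWeight, Set.ncard_eq_zero (Set.toFinite _), Set.eq_empty_iff_forall_notMem, Prod.ext_iff,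
    funext_iff, funext_iff, ← forall_and]
  simp only [Set.mem_ofPred_eq, not_or, not_not, Prod.fst_zero, Prod.snd_zero, Pi.zero_apply]

section Shortening

variable {K : Type*} [Field K] {n r : ℕ} (x : Fin n → K) (e : Fin r → Fin n)

def shortenMap : ((Fin n → K) × (Fin n → K)) →ₗ[K] ((Fin r → K) × (Fin r → K)) :=
  (LinearMap.funLeft K K e ∘ₗ LinearMap.mulLeft K x).prodMap (LinearMap.funLeft K K e)

@[simp]
theorem shortenMap_apply (a : (Fin n → K) × (Fin n → K)) :
    shortenMap x e a = (fun j => x (e j) * a.1 (e j), fun j => a.2 (e j)) :=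
  rfl

noncomputable def lengthen (a : (Fin r → K) × (Fin r → K)) : (Fin n → K) × (Fin n → K) :=
  (extend e a.1 0, x * extend e a.2 0)

variable {x e}

theorem sympIP_shortenMap (he : Injective e) (hx : ∀ i ∉ Set.range e, x i = 0)
    (a b : (Fin n → K) × (Fin n → K)) :
    sympIP (shortenMap x e a) (shortenMap x e b) =
      ∑ i, x i * (a.1 i * b.2 i - b.1 i * a.2 i) :=
  Fintype.sum_of_injective e he _ _ (fun i hi => by rw [hx i hi, zero_mul])
    (fun j => by simp only [shortenMap_apply]; ring)

theorem sympIP_lengthen (he : Injective e) (a : (Fin r → K) × (Fin r → K))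
    (c : (Fin n → K) × (Fin n → K)) :
    sympIP (lengthen x e a) c = sympIP a (shortenMap x e c) := by
  refine (Fintype.sum_of_injective e he _ _ (fun i hi => ?_) (fun j => ?_)).symm
  · simp [lengthen, extend_apply' _ _ _ hi]
  · simp only [lengthen, shortenMap_apply, Pi.mul_apply, he.extend_apply]
    ring

theorem sympWeight_lengthen (he : Injective e) (hx : ∀ j, x (e j) ≠ 0)
    (a : (Fin r → K) × (Fin r → K)) :
    sympWeight (lengthen x e a) = sympWeight a := by
  rw [sympWeight, sympWeight, ← Set.ncard_image_of_injective _ he]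
  congr 1
  ext i
  by_cases hi : ∃ j, e j = i
  · obtain ⟨j, rfl⟩ := hi
    simp [lengthen, he.extend_apply, he.eq_iff, hx j]
  · simp_all [lengthen]

end Shortening

theorem puncture_code_shortening_general
    (K : Type*) [Field K] [DecidableEq K]
    (n k d : ℕ)
    (C : Submodule K ((Fin n → K) × (Fin n → K)))
    (hdim : Module.finrank K C = n - k)
    (hdual : ∀ a : (Fin n → K) × (Fin n → K),
      (∀ c ∈ C, sympIP a c = 0) → a ≠ 0 → d ≤ sympWeight a)
    (x : Fin n → K) (r : ℕ) (hxwt : hammingNorm x = r)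
    (hxP : ∀ a ∈ C, ∀ b ∈ C,
      ∑ i, x i * (a.1 i * b.2 i - b.1 i * a.2 i) = 0) :
    ∃ D : Submodule K ((Fin r → K) × (Fin r → K)),
      (∀ a ∈ D, ∀ b ∈ D, sympIP a b = 0) ∧
      Module.finrank K D ≤ n - k ∧
      (∀ a : (Fin r → K) × (Fin r → K),
        (∀ c ∈ D, sympIP a c = 0) → a ≠ 0 → d ≤ sympWeight a) := by
  obtain ⟨e, he, hrange⟩ : ∃ e : Fin r → Fin n, Injective e ∧ Set.range e = {i | x i ≠ 0} :=
    ⟨_, (Finset.orderEmbOfFin _ hxwt).injective, by simp [Finset.range_orderEmbOfFin]⟩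
  have hx_off : ∀ i ∉ Set.range e, x i = 0 := by simp [hrange]
  have hx_on : ∀ j, x (e j) ≠ 0 := fun j => (hrange.subset ⟨j, rfl⟩ :)
  refine ⟨C.map (shortenMap x e), ?_, hdim ▸ Submodule.finrank_map_le _ C, ?_⟩
  · rintro _ ⟨a, ha, rfl⟩ _ ⟨b, hb, rfl⟩
    rw [sympIP_shortenMap he hx_off]
    exact hxP a ha b hb
  · intro a ha ha0
    rw [← sympWeight_lengthen he hx_on a]
    refine hdual _ (fun c hc => ?_) ?_
    · rw [sympIP_lengthen he]
      exact ha _ (Submodule.mem_map_of_mem hc)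
    · rwa [ne_eq, ← sympWeight_eq_zero_iff, sympWeight_lengthen he hx_on, sympWeight_eq_zero_iff]

/-- Theorem 5 (shortening quantum codes): let `K` be a finite field with `q`
elements, `C ⊆ K^n × K^n` a `K`-linear subspace of dimension `n - k` such that
every nonzero element of the symplectic dual `C∗` has symplectic weight at
least `d ≥ 1`.  If the puncture code `P(C)` contains a vector `x` of Hamming
weight `r ≥ 1`, then there is a symplectic self-orthogonal `K`-linear subspace
`D ⊆ K^r × K^r` of dimension at most `n - k` such that every nonzero element of
the symplectic dual `D∗` has symplectic weight at least `d`. -/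
theorem puncture_code_shortening
    (q : ℕ) (K : Type*) [Field K] [Fintype K] [DecidableEq K]
    (hK : Fintype.card K = q)
    (n k d : ℕ) (hk : k ≤ n) (hd : 1 ≤ d)
    (C : Submodule K ((Fin n → K) × (Fin n → K)))
    (hdim : Module.finrank K C = n - k)
    (hdual : ∀ a : (Fin n → K) × (Fin n → K),
      (∀ c ∈ C, sympIP a c = 0) → a ≠ 0 → d ≤ sympWeight a)
    (x : Fin n → K) (r : ℕ) (hr : 1 ≤ r) (hxwt : hammingNorm x = r)
    (hxP : ∀ a ∈ C, ∀ b ∈ C,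
      ∑ i, x i * (a.1 i * b.2 i - b.1 i * a.2 i) = 0) :
    ∃ D : Submodule K ((Fin r → K) × (Fin r → K)),
      (∀ a ∈ D, ∀ b ∈ D, sympIP a b = 0) ∧
      Module.finrank K D ≤ n - k ∧
      (∀ a : (Fin r → K) × (Fin r → K),
        (∀ c ∈ D, sympIP a c = 0) → a ≠ 0 → d ≤ sympWeight a) :=
  puncture_code_shortening_general K n k d C hdim hdual x r hxwt hxP
end

section
/- Let C ⊆ F^n be an F-linear code, let γ ∈ F satisfy γ^q ≠ γ, and let x ∈ K^n be a vector such that ∑_{i=1}^n x_i c_i d_i^q = 0 for all c, d ∈ C. Then the code D̃ = {(v, (x_i w_i)_{i=1}^n) : v, w ∈ K^n with v + γ·w ∈ C} ⊆ K^n × K^n is symplectic self-orthogonal over K. -/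
/-- Theorem 7 (key step): let `F` be a finite field with `q²` elements and
`K = {x ∈ F : x^q = x}` its subfield with `q` elements.  Let `C ⊆ F^n` be an
`F`-linear code, `γ ∈ F` with `γ^q ≠ γ`, and `x ∈ K^n` a vector with
`∑ i, x i * c i * (d i)^q = 0` for all `c, d ∈ C`.  Then the code
`D̃ = {(v, (x i * w i)_i) : v, w ∈ K^n, v + γ·w ∈ C}` is self-orthogonal with
respect to the symplectic inner product over `K`. -/
theorem scaled_hermitian_code_symplectic_self_orthogonal
    (q : ℕ) (hq : IsPrimePow q)
    (F : Type*) [Field F] [Fintype F] (hF : Fintype.card F = q ^ 2)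
    (n : ℕ) (C : Submodule F (Fin n → F))
    (γ : F) (hγ : γ ^ q ≠ γ)
    (x : Fin n → F) (hxK : ∀ i, (x i) ^ q = x i)
    (hx : ∀ c ∈ C, ∀ d ∈ C, ∑ i, x i * (c i * (d i) ^ q) = 0)
    (v w v' w' : Fin n → F)
    (hv : ∀ i, (v i) ^ q = v i) (hw : ∀ i, (w i) ^ q = w i)
    (hv' : ∀ i, (v' i) ^ q = v' i) (hw' : ∀ i, (w' i) ^ q = w' i)
    (hmem : (fun i => v i + γ * w i) ∈ C)
    (hmem' : (fun i => v' i + γ * w' i) ∈ C) :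
    ∑ i, (v i * (x i * w' i) - v' i * (x i * w i)) = 0 := by

  -- Find the characteristic
  obtain ⟨p, k, hp, hk, hpk⟩ := hq
  have hp' : p.Prime := Nat.prime_iff.mpr hp
  haveI : CharP F (ringChar F) := ringChar.charP F
  obtain ⟨m, hm⟩ := FiniteField.card F (ringChar F)
  have hrp : ringChar F = p := by
    have h1 : Fintype.card F = p ^ (2 * k) := by
      rw [hF, ← hpk, ← pow_mul, Nat.mul_comm]
    have h2 : p ∣ ringChar F ^ (m : ℕ) := by
      rw [← hm.2, h1]
      exact dvd_pow_self p (by positivity)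
    have h3 : p ∣ ringChar F := hp'.dvd_of_dvd_pow h2
    have := hm.1.pos
    exact ((Nat.prime_dvd_prime_iff_eq hp' hm.1).mp h3).symm
  haveI hcp : CharP F p := hrp ▸ ringChar.charP F
  have hfrob : ∀ a b : F, (a + b) ^ q = a ^ q + b ^ q := by
    intro a b
    rw [← hpk]
    haveI : Fact p.Prime := ⟨hp'⟩; exact add_pow_char_pow a b p k
  have key : ∀ i, (γ ^ q - γ) * (v i * (x i * w' i) - v' i * (x i * w i)) =
      x i * ((v i + γ * w i) * (v' i + γ ^ q * w' i))
      - x i * ((v' i + γ * w' i) * (v i + γ ^ q * w i)) := by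
    intro i; ring
  have e1 : ∑ i, x i * ((v i + γ * w i) * (v' i + γ ^ q * w' i)) = 0 := by
    have h1 := hx _ hmem _ hmem'
    rw [← h1]
    apply Finset.sum_congr rfl
    intro i _
    simp only [hfrob, mul_pow, hv', hw']
  have e2 : ∑ i, x i * ((v' i + γ * w' i) * (v i + γ ^ q * w i)) = 0 := by
    have h2 := hx _ hmem' _ hmem
    rw [← h2]
    apply Finset.sum_congr rfl
    intro i _
    simp only [hfrob, mul_pow, hv, hw]
  have hsum : (γ ^ q - γ) * ∑ i, (v i * (x i * w' i) - v' i * (x i * w i)) = 0 := by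
    rw [Finset.mul_sum]
    rw [Finset.sum_congr rfl (fun i _ => key i)]
    rw [Finset.sum_sub_distrib, e1, e2, sub_zero]
  rcases mul_eq_zero.mp hsum with h | h
  · exact absurd (sub_eq_zero.mp h) hγ
  · exact h
end

section
/- Let q be a prime power and μ an integer with 0 ≤ μ and 2μ ≤ q−2. Then the F-linear span of the componentwise products { (c_i d_i)_{i=1}^q : c, d ∈ C^(q,μ) } equals C^(q,2μ). -/
/-- Equation (14): for `0 ≤ μ` with `2μ ≤ q - 2`, the `F`-linear span of the
componentwise products of pairs of codewords of `C^(q,μ)` equals `C^(q,2μ)`. -/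
theorem span_products_C_q_mu
    (q : ℕ) (hq : IsPrimePow q)
    (F : Type*) [Field F] [Fintype F] (hF : Fintype.card F = q)
    (α : Fˣ) (hα : ∀ x : Fˣ, x ∈ Subgroup.zpowers α)
    (μ : ℕ) (hμ : 2 * μ ≤ q - 2)
    (G : ℕ → Fin q → F)
    (hG : ∀ i : ℕ, ∀ l : Fin q, G i l =
      if (l : ℕ) = q - 1 then (if i = 0 then 1 else 0)
      else (α : F) ^ (i * (l : ℕ)))
    (Cμ C2μ : Submodule F (Fin q → F))
    (hCμ : Cμ = Submodule.span F {g : Fin q → F | ∃ i ≤ μ, g = G i})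
    (hC2μ : C2μ = Submodule.span F {g : Fin q → F | ∃ i ≤ 2 * μ, g = G i}) :
    Submodule.span F
      {g : Fin q → F | ∃ c ∈ Cμ, ∃ d ∈ Cμ, g = fun l => c l * d l} = C2μ := by
  have key : ∀ i j : ℕ, (fun l => G i l * G j l) = G (i + j) := by
    intro i j
    funext l
    rw [hG, hG, hG]
    by_cases h : (l : ℕ) = q - 1
    · simp only [if_pos h]
      rcases eq_or_ne i 0 with rfl | hi
      · rcases eq_or_ne j 0 with rfl | hj
        · simp
        · simp [hj]
      · have hij : i + j ≠ 0 := by omega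
        simp [hi, hij]
    · simp only [if_neg h]
      rw [add_mul, pow_add]
  subst hCμ hC2μ
  apply le_antisymm
  · rw [Submodule.span_le]
    rintro g ⟨c, hc, d, hd, rfl⟩
    have main : ∀ c ∈ Submodule.span F {g : Fin q → F | ∃ i ≤ μ, g = G i},
        ∀ d ∈ Submodule.span F {g : Fin q → F | ∃ i ≤ μ, g = G i},
        (fun l => c l * d l) ∈
          Submodule.span F {g : Fin q → F | ∃ i ≤ 2 * μ, g = G i} := by
      intro c hc
      induction hc using Submodule.span_induction with
      | mem x hx =>
        obtain ⟨i, hi, rfl⟩ := hx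
        intro d hd
        induction hd using Submodule.span_induction with
        | mem y hy =>
          obtain ⟨j, hj, rfl⟩ := hy
          rw [key]
          exact Submodule.subset_span ⟨i + j, by omega, rfl⟩
        | zero =>
          have : (fun l => G i l * (0 : Fin q → F) l) = 0 := by funext l; simp
          rw [this]; exact Submodule.zero_mem _
        | add y z _ _ hy hz =>
          have : (fun l => G i l * (y + z) l) =
              (fun l => G i l * y l) + fun l => G i l * z l := by
            funext l; simp [mul_add]
          rw [this]; exact Submodule.add_mem _ hy hz
        | smul a y _ hy =>
          have : (fun l => G i l * (a • y) l) = a • fun l => G i l * y l := by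
            funext l; simp [mul_left_comm]
          rw [this]; exact Submodule.smul_mem _ a hy
      | zero =>
        intro d hd
        have : (fun l => (0 : Fin q → F) l * d l) = 0 := by funext l; simp
        rw [this]; exact Submodule.zero_mem _
      | add x y _ _ hx hy =>
        intro d hd
        have : (fun l => (x + y) l * d l) =
            (fun l => x l * d l) + fun l => y l * d l := by
          funext l; simp [add_mul]
        rw [this]; exact Submodule.add_mem _ (hx d hd) (hy d hd)
      | smul a x _ hx =>
        intro d hd
        have : (fun l => (a • x) l * d l) = a • fun l => x l * d l := by
          funext l; simp [mul_assoc]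
        rw [this]; exact Submodule.smul_mem _ a (hx d hd)
    exact main c hc d hd
  · rw [Submodule.span_le]
    rintro g ⟨k, hk, rfl⟩
    apply Submodule.subset_span
    refine ⟨G (min k μ), Submodule.subset_span ⟨min k μ, min_le_right _ _, rfl⟩,
      G (k - min k μ), Submodule.subset_span ⟨k - min k μ, by omega, rfl⟩, ?_⟩
    rw [key, Nat.add_sub_cancel' (min_le_left k μ)]
end

section
/- Let q be a prime power and μ an integer with 0 ≤ μ ≤ q−2. Then the F-linear span of { (c_i d_i^q)_{i=1}^{q²} : c, d ∈ C^(q²,μ) } equals the F-linear span of { G_{i+qj} : 0 ≤ i ≤ μ, 0 ≤ j ≤ μ }. -/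
/-!
Since `q ∣ |F|`, the map `x ↦ x ^ q` is a power of the Frobenius, so `(c, d) ↦ (c_l d_l ^ q)_l`
is linear in `c` and semilinear in `d`; hence the span of its values on `span S × span T` is the
span of its values on `S × T`. On the generators, the product of `G_i` with `G_j ^ q` is
`G_(i + q j)`, because `α ^ (il) α ^ (qjl) = α ^ ((i + qj) l)` and the last coordinate of
`G_(i + q j)` is `1` exactly when `i = j = 0`.
-/

open Submodule Set

theorem FiniteField.exists_ringHom_apply_eq_pow_of_dvd_card {F : Type*} [Field F] [Fintype F]
    {q : ℕ} (hq : q ∣ Fintype.card F) : ∃ σ : F →+* F, ∀ x, σ x = x ^ q := by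
  obtain ⟨n, hp, hcard⟩ := FiniteField.card F (ringChar F)
  obtain ⟨m, -, rfl⟩ := (Nat.dvd_prime_pow hp).mp (hcard ▸ hq)
  have := Fact.mk hp
  exact ⟨iterateFrobenius F (ringChar F) m, iterateFrobenius_def (ringChar F) m⟩

theorem Submodule.span_image2_span_span {R M N P : Type*} [CommSemiring R] [AddCommMonoid M]
    [AddCommMonoid N] [AddCommMonoid P] [Module R M] [Module R N] [Module R P] {σ : R →+* R}
    (f : M →ₗ[R] N →ₛₗ[σ] P) (s : Set M) (t : Set N) :
    span R (image2 (fun m n => f m n) (span R s) (span R t))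
      = span R (image2 (fun m n => f m n) s t) := by
  refine le_antisymm ?_ (span_mono (image2_subset subset_span subset_span))
  rw [span_le]
  rintro _ ⟨m, hm, n, hn, rfl⟩
  have hleft : ∀ n' ∈ t, f m n' ∈ span R (image2 (fun m n => f m n) s t) := fun n' hn' =>
    have hsub : f.flip n' '' s ⊆ image2 (fun m n => f m n) s t :=
      image_subset_iff.mpr fun _ hm' => mem_image2_of_mem hm' hn'
    span_mono hsub (image_span_subset_span (f.flip n') s ⟨m, hm, rfl⟩)
  exact span_le.mpr (image_subset_iff.mpr hleft) (image_span_subset_span (f m) t ⟨n, hn, rfl⟩)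

def Pi.mulTwisted {ι R : Type*} [CommSemiring R] (σ : R →+* R) :
    (ι → R) →ₗ[R] (ι → R) →ₛₗ[σ] (ι → R) :=
  LinearMap.mk₂'ₛₗ (RingHom.id R) σ (fun c d l => c l * σ (d l))
    (fun _ _ _ => funext fun _ => add_mul _ _ _)
    (fun _ _ _ => funext fun _ => mul_assoc _ _ _)
    (fun _ _ _ => funext fun _ => by simp only [Pi.add_apply, map_add, mul_add])
    (fun _ _ _ => funext fun _ => by simp only [Pi.smul_apply, smul_eq_mul, map_mul]; ring)

/-- `G i` is the vector of values of `X ^ i` at `a ^ 0, …, a ^ (N - 2), 0`. -/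
theorem mul_pow_eq_of_monomial_values {F : Type*} [CommMonoidWithZero F] {N q : ℕ} (hq : q ≠ 0)
    (a : F) (G : ℕ → Fin N → F)
    (hG : ∀ i l, G i l = if (l : ℕ) = N - 1 then (if i = 0 then 1 else 0) else a ^ (i * l))
    (i j : ℕ) : (fun l => G i l * G j l ^ q) = G (i + q * j) := by
  funext l
  simp only [hG]
  by_cases hl : (l : ℕ) = N - 1
  · have hzero : i + q * j = 0 ↔ i = 0 ∧ j = 0 := by simp [hq]
    simp only [hl, if_true, hzero]
    split_ifs <;> simp_all
  · simp only [hl, if_false, ← pow_mul, ← pow_add]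
    ring_nf

theorem span_hermitian_products_C_q2_mu_general
    (q : ℕ)
    (F : Type*) [Field F] [Fintype F] (hF : Fintype.card F = q ^ 2)
    (α : Fˣ)
    (μ : ℕ)
    (G : ℕ → Fin (q ^ 2) → F)
    (hG : ∀ i : ℕ, ∀ l : Fin (q ^ 2), G i l =
      if (l : ℕ) = q ^ 2 - 1 then (if i = 0 then 1 else 0)
      else (α : F) ^ (i * (l : ℕ)))
    (C : Submodule F (Fin (q ^ 2) → F))
    (hC : C = Submodule.span F {g : Fin (q ^ 2) → F | ∃ i ≤ μ, g = G i}) :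
    Submodule.span F
        {g : Fin (q ^ 2) → F | ∃ c ∈ C, ∃ d ∈ C, g = fun l => c l * (d l) ^ q}
      = Submodule.span F
        {g : Fin (q ^ 2) → F | ∃ i ≤ μ, ∃ j ≤ μ, g = G (i + q * j)} := by
  obtain ⟨σ, hσ⟩ :=
    FiniteField.exists_ringHom_apply_eq_pow_of_dvd_card (hF ▸ dvd_pow_self q two_ne_zero)
  have hq : q ≠ 0 := by
    rintro rfl
    exact Fintype.card_ne_zero (hF.trans (zero_pow two_ne_zero))
  have hgen : {g : Fin (q ^ 2) → F | ∃ i ≤ μ, g = G i} = G '' Iic μ := by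
    ext; simp [eq_comm]
  have hmul : ∀ c d : Fin (q ^ 2) → F, Pi.mulTwisted σ c d = fun l => c l * d l ^ q := fun c d =>
    funext fun l => congrArg (c l * ·) (hσ (d l))
  calc _ = span F (image2 (fun c d => Pi.mulTwisted σ c d) C C) := by
        congr 1; ext; simp [hmul, eq_comm]
    _ = span F (image2 (fun c d => Pi.mulTwisted σ c d) (G '' Iic μ) (G '' Iic μ)) := by
        rw [hC, hgen, span_image2_span_span]
    _ = _ := by
        congr 1; ext; simp [hmul, mul_pow_eq_of_monomial_values hq _ G hG, eq_comm]

/-- Equation (15): for `0 ≤ μ ≤ q - 2`, the `F`-linear span of the vectors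
`(c i * (d i)^q)_i` for `c, d ∈ C^(q²,μ)` equals the `F`-linear span of the
vectors `G_(i+q·j)` for `0 ≤ i, j ≤ μ`. -/
theorem span_hermitian_products_C_q2_mu
    (q : ℕ) (hq : IsPrimePow q)
    (F : Type*) [Field F] [Fintype F] (hF : Fintype.card F = q ^ 2)
    (α : Fˣ) (hα : ∀ x : Fˣ, x ∈ Subgroup.zpowers α)
    (μ : ℕ) (hμ : μ ≤ q - 2)
    (G : ℕ → Fin (q ^ 2) → F)
    (hG : ∀ i : ℕ, ∀ l : Fin (q ^ 2), G i l =
      if (l : ℕ) = q ^ 2 - 1 then (if i = 0 then 1 else 0)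
      else (α : F) ^ (i * (l : ℕ)))
    (C : Submodule F (Fin (q ^ 2) → F))
    (hC : C = Submodule.span F {g : Fin (q ^ 2) → F | ∃ i ≤ μ, g = G i}) :
    Submodule.span F
        {g : Fin (q ^ 2) → F | ∃ c ∈ C, ∃ d ∈ C, g = fun l => c l * (d l) ^ q}
      = Submodule.span F
        {g : Fin (q ^ 2) → F | ∃ i ≤ μ, ∃ j ≤ μ, g = G (i + q * j)} :=
  span_hermitian_products_C_q2_mu_general q F hF α μ G hG C hC
end

section
/- Let q be a prime power, F a finite field with exactly q elements, and μ an integer with 0 ≤ μ and 2μ < q−1. Then there exists an F-linear code C ⊆ F^q with dim_F C = μ+1 such that C ⊆ C⊥ with respect to the Euclidean inner product and the minimum Hamming weight of the nonzero vectors of C⊥ equals μ+2. -/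
/-!
`C` is the full-length Reed–Solomon code: the evaluations, at all points of `F`, of the
polynomials of degree `≤ μ`. Since `∑_{x ∈ F} x ^ i = 0` for `i < q - 1`, two evaluation
vectors are orthogonal as soon as the product of their polynomials has degree `< q - 1`.
This gives `C ⊆ C⊥` when `2μ < q - 1`, and puts in `C⊥` the evaluation vector of a product
of `q - μ - 2` distinct linear factors, which has weight `μ + 2`. Conversely, a nonzero
`v ∈ C⊥` of weight `≤ μ + 1` pairs nontrivially with the polynomial of degree `≤ μ`
vanishing on its support except at one point.
-/

open Polynomial Finset

section ReedSolomon

variable {F ι : Type*} [Field F]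

noncomputable def evalAt (α : ι → F) : F[X] →ₗ[F] ι → F :=
  LinearMap.pi fun i => leval (α i)

@[simp]
theorem evalAt_apply (α : ι → F) (p : F[X]) (i : ι) : evalAt α p i = p.eval (α i) := rfl

noncomputable def reedSolomonCode (α : ι → F) (k : ℕ) : Submodule F (ι → F) :=
  (degreeLT F k).map (evalAt α)

theorem evalAt_mem_reedSolomonCode (α : ι → F) {k : ℕ} {p : F[X]} (hp : p.natDegree < k) :
    evalAt α p ∈ reedSolomonCode α k :=
  Submodule.mem_map_of_mem <|
    mem_degreeLT.2 (degree_le_natDegree.trans_lt (by exact_mod_cast hp))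

theorem mem_reedSolomonCode_succ {α : ι → F} {k : ℕ} {v : ι → F} :
    v ∈ reedSolomonCode α (k + 1) ↔ ∃ p : F[X], p.natDegree ≤ k ∧ evalAt α p = v := by
  simp only [reedSolomonCode, degreeLT_succ_eq_degreeLE, Submodule.mem_map, mem_degreeLE,
    natDegree_le_iff_degree_le]

theorem finrank_reedSolomonCode [Fintype ι] {α : ι → F} (hα : Function.Injective α) {k : ℕ}
    (hk : k ≤ Fintype.card ι) : Module.finrank F (reedSolomonCode α k) = k := by
  have hinj : Function.Injective (evalAt α ∘ₗ (degreeLT F k).subtype) := by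
    refine (injective_iff_map_eq_zero _).2 fun ⟨p, hp⟩ hp0 => Subtype.ext ?_
    refine eq_zero_of_degree_lt_of_eval_index_eq_zero univ hα.injOn ?_ fun i _ => congrFun hp0 i
    exact (mem_degreeLT.1 hp).trans_le (by exact_mod_cast hk)
  rw [reedSolomonCode, ← Submodule.range_subtype (degreeLT F k), ← LinearMap.range_comp,
    LinearMap.finrank_range_of_inj hinj, (degreeLTEquiv F k).finrank_eq, Module.finrank_fin_fun]

theorem FiniteField.sum_eval_eq_zero [Fintype F] {p : F[X]}
    (hp : p.natDegree < Fintype.card F - 1) : ∑ x, p.eval x = 0 := by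
  simp only [eval_eq_sum_range]
  rw [Finset.sum_comm]
  refine Finset.sum_eq_zero fun i hi => ?_
  have hi : i < Fintype.card F - 1 := (mem_range.1 hi).trans_le (by omega)
  rw [← Finset.mul_sum, FiniteField.sum_pow_lt_card_sub_one F i hi, mul_zero]

theorem sum_eval_mul_eval_eq_zero [Fintype F] [Fintype ι] (e : ι ≃ F) {p r : F[X]}
    (h : p.natDegree + r.natDegree < Fintype.card F - 1) :
    ∑ i, p.eval (e i) * r.eval (e i) = 0 := by
  simpa [eval_mul] using (e.sum_comp fun x => (p * r).eval x).trans
    (FiniteField.sum_eval_eq_zero (natDegree_mul_le.trans_lt h))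

theorem reedSolomonCode_sum_mul_eq_zero [Fintype F] [Fintype ι] (e : ι ≃ F) {k : ℕ}
    (hk : 2 * k < Fintype.card F - 1) {v c : ι → F} (hv : v ∈ reedSolomonCode e (k + 1))
    (hc : c ∈ reedSolomonCode e (k + 1)) : ∑ i, v i * c i = 0 := by
  obtain ⟨p, hp, rfl⟩ := mem_reedSolomonCode_succ.1 hv
  obtain ⟨r, hr, rfl⟩ := mem_reedSolomonCode_succ.1 hc
  exact sum_eval_mul_eval_eq_zero e (by omega)

theorem hammingNorm_evalAt_nodal [Fintype ι] [DecidableEq F] {α : ι → F}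
    (hα : Function.Injective α) (s : Finset ι) :
    hammingNorm (evalAt α (Lagrange.nodal s α)) = Fintype.card ι - #s := by
  classical
  have hsupp : ∀ i, evalAt α (Lagrange.nodal s α) i ≠ 0 ↔ i ∉ s := fun i =>
    ⟨fun h hi => h (Lagrange.eval_nodal_at_node hi),
     fun hi => Lagrange.eval_nodal_not_at_node fun j hj h => hi (hα h ▸ hj)⟩
  rw [hammingNorm, filter_congr fun i _ => hsupp i, ← card_compl]
  congr 1
  ext i
  simp

theorem add_one_le_hammingNorm_of_sum_mul_eq_zero [Fintype ι] [DecidableEq F] {α : ι → F}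
    (hα : Function.Injective α) {k : ℕ} {v : ι → F}
    (hv : ∀ c ∈ reedSolomonCode α k, ∑ i, v i * c i = 0) (hv0 : v ≠ 0) :
    k + 1 ≤ hammingNorm v := by
  classical
  by_contra! hlt
  obtain ⟨t, ht⟩ := Function.ne_iff.1 hv0
  set support : Finset ι := {i | v i ≠ 0} with hsupport
  have ht_mem : t ∈ support := by simpa [hsupport] using ht
  -- `g` kills every term of the pairing with `v` except the one at `t`
  set g := Lagrange.nodal (support.erase t) α
  have hg : evalAt α g ∈ reedSolomonCode α k := by
    refine evalAt_mem_reedSolomonCode α ?_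
    rw [Lagrange.natDegree_nodal, card_erase_of_mem ht_mem]
    exact lt_of_lt_of_le (Nat.sub_lt (card_pos.2 ⟨t, ht_mem⟩) one_pos) (Nat.le_of_lt_succ hlt)
  have hpair : ∑ i, v i * evalAt α g i = v t * g.eval (α t) := by
    refine sum_eq_single t (fun i _ hi => ?_) (by simp)
    by_cases hvi : v i = 0
    · rw [hvi, zero_mul]
    · have hi_mem : i ∈ support.erase t := mem_erase.2 ⟨hi, by simpa [hsupport] using hvi⟩
      rw [evalAt_apply, Lagrange.eval_nodal_at_node hi_mem, mul_zero]
  refine mul_ne_zero ht (Lagrange.eval_nodal_not_at_node fun j hj h => ?_) (hpair ▸ hv _ hg)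
  exact ne_of_mem_erase hj (hα h).symm

theorem exists_hammingNorm_eq_of_sum_mul_eq_zero [Fintype F] [Fintype ι] [DecidableEq F]
    (e : ι ≃ F) {k : ℕ} (hk : k + 2 ≤ Fintype.card F) :
    ∃ v : ι → F, (∀ c ∈ reedSolomonCode e (k + 1), ∑ i, v i * c i = 0) ∧
      hammingNorm v = k + 2 := by
  have hcard := Fintype.card_congr e
  obtain ⟨s, -, hs⟩ := exists_subset_card_eq (s := (univ : Finset ι))
    (n := Fintype.card ι - (k + 2)) (by rw [card_univ]; omega)
  refine ⟨evalAt e (Lagrange.nodal s e), fun c hc => ?_, ?_⟩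
  · obtain ⟨p, hp, rfl⟩ := mem_reedSolomonCode_succ.1 hc
    exact sum_eval_mul_eval_eq_zero e (by rw [Lagrange.natDegree_nodal, hs]; omega)
  · rw [hammingNorm_evalAt_nodal e.injective, hs]
    omega

end ReedSolomon

theorem exists_weakly_self_dual_mds_full_length_general
    (q : ℕ)
    (F : Type*) [Field F] [Fintype F] [DecidableEq F] (hF : Fintype.card F = q)
    (μ : ℕ) (hμ : 2 * μ < q - 1) :
    ∃ C : Submodule F (Fin q → F),
      Module.finrank F C = μ + 1 ∧
      (∀ v ∈ C, ∀ c ∈ C, ∑ i, v i * c i = 0) ∧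
      IsLeast {w : ℕ | ∃ v : Fin q → F,
        (∀ c ∈ C, ∑ i, v i * c i = 0) ∧ v ≠ 0 ∧ hammingNorm v = w} (μ + 2) := by
  subst hF
  let e : Fin (Fintype.card F) ≃ F := (Fintype.equivFin F).symm
  refine ⟨reedSolomonCode e (μ + 1),
    finrank_reedSolomonCode e.injective (by rw [Fintype.card_fin]; omega),
    fun v hv c hc => reedSolomonCode_sum_mul_eq_zero e hμ hv hc, ?_, ?_⟩
  · obtain ⟨v, hv, hnorm⟩ := exists_hammingNorm_eq_of_sum_mul_eq_zero e (k := μ) (by omega)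
    exact ⟨v, hv, hammingNorm_ne_zero_iff.1 (by omega), hnorm⟩
  · rintro w ⟨v, hv, hv0, rfl⟩
    exact add_one_le_hammingNorm_of_sum_mul_eq_zero e.injective hv hv0

/-- Theorem 4 (classical ingredient for `𝒞^(q,μ) = QECC(q, q-2μ-2, μ+2, q)`):
for a finite field `F` with `q` elements and `0 ≤ μ` with `2μ < q - 1`, there
exists an `F`-linear code `C ⊆ F^q` of dimension `μ + 1` which is contained in
its Euclidean dual `C⊥`, such that the minimum Hamming weight of the nonzero
vectors of `C⊥` equals `μ + 2`. -/
theorem exists_weakly_self_dual_mds_full_length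
    (q : ℕ) (hq : IsPrimePow q)
    (F : Type*) [Field F] [Fintype F] [DecidableEq F] (hF : Fintype.card F = q)
    (μ : ℕ) (hμ : 2 * μ < q - 1) :
    ∃ C : Submodule F (Fin q → F),
      Module.finrank F C = μ + 1 ∧
      (∀ v ∈ C, ∀ c ∈ C, ∑ i, v i * c i = 0) ∧
      IsLeast {w : ℕ | ∃ v : Fin q → F,
        (∀ c ∈ C, ∑ i, v i * c i = 0) ∧ v ≠ 0 ∧ hammingNorm v = w} (μ + 2) :=
  exists_weakly_self_dual_mds_full_length_general q F hF μ hμ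
end

section
/- Let q be a prime power, F a finite field with exactly q elements, and μ an integer with 0 ≤ μ and 2μ < q−1. Then there exists an F-linear code C ⊆ F^{q−1} with dim_F C = μ such that C ⊆ C⊥ with respect to the Euclidean inner product and the minimum Hamming weight of the nonzero vectors of C⊥ equals μ+1. -/
open Matrix in
lemma my_aux_det {F : Type*} [Field F] {m : ℕ} {β : Fin m → F}
    (hinj : Function.Injective β) (h0 : ∀ i, β i ≠ 0) :
    (Matrix.of fun i j : Fin m => β i ^ ((j : ℕ) + 1)).det ≠ 0 := by
  have hM : (Matrix.of fun i j : Fin m => β i ^ ((j : ℕ) + 1))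
      = Matrix.diagonal β * Matrix.vandermonde β := by
    ext i j
    simp [Matrix.vandermonde, pow_succ']
  rw [hM, Matrix.det_mul, Matrix.det_diagonal]
  exact mul_ne_zero (Finset.prod_ne_zero_iff.mpr fun i _ => h0 i)
    (Matrix.det_vandermonde_ne_zero_iff.mpr hinj)

lemma my_aux_cols {F : Type*} [Field F] {m : ℕ} {β : Fin m → F}
    (hinj : Function.Injective β) (h0 : ∀ i, β i ≠ 0) {c : Fin m → F}
    (h : ∀ i : Fin m, ∑ j, c j * β i ^ ((j : ℕ) + 1) = 0) : c = 0 := by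
  apply Matrix.eq_zero_of_mulVec_eq_zero (my_aux_det hinj h0)
  funext i
  simpa [Matrix.mulVec, dotProduct, mul_comm] using h i

lemma my_aux_rows {F : Type*} [Field F] {m : ℕ} {β : Fin m → F}
    (hinj : Function.Injective β) (h0 : ∀ i, β i ≠ 0) {c : Fin m → F}
    (h : ∀ j : Fin m, ∑ i, c i * β i ^ ((j : ℕ) + 1) = 0) : c = 0 := by
  have hd : ((Matrix.of fun i j : Fin m => β i ^ ((j : ℕ) + 1)).transpose).det ≠ 0 := by
    rw [Matrix.det_transpose]; exact my_aux_det hinj h0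
  apply Matrix.eq_zero_of_mulVec_eq_zero hd
  funext j
  simpa [Matrix.mulVec, dotProduct, Matrix.transpose, mul_comm] using h j

/-- the dot-product-with-`v` linear functional. -/
def my_lin {F : Type*} [Field F] {n : ℕ} (v : Fin n → F) : (Fin n → F) →ₗ[F] F where
  toFun c := ∑ i, v i * c i
  map_add' a b := by simp [mul_add, Finset.sum_add_distrib]
  map_smul' a c := by simp [Finset.mul_sum, mul_left_comm]

/-- Theorem 4 (classical ingredient for `𝒞_s^(q,μ) = QECC(q-1, q-2μ-1, μ+1, q)`):
for a finite field `F` with `q` elements and `0 ≤ μ` with `2μ < q - 1`, there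
exists an `F`-linear code `C ⊆ F^(q-1)` of dimension `μ` which is contained in
its Euclidean dual `C⊥`, such that the minimum Hamming weight of the nonzero
vectors of `C⊥` equals `μ + 1`. -/
theorem exists_weakly_self_dual_mds_shortened
    (q : ℕ) (hq : IsPrimePow q)
    (F : Type*) [Field F] [Fintype F] [DecidableEq F] (hF : Fintype.card F = q)
    (μ : ℕ) (hμ : 2 * μ < q - 1) :
    ∃ C : Submodule F (Fin (q - 1) → F),
      Module.finrank F C = μ ∧
      (∀ v ∈ C, ∀ c ∈ C, ∑ i, v i * c i = 0) ∧
      IsLeast {w : ℕ | ∃ v : Fin (q - 1) → F,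
        (∀ c ∈ C, ∑ i, v i * c i = 0) ∧ v ≠ 0 ∧ hammingNorm v = w} (μ + 1) := by
  have hq2 : 2 ≤ q := hq.two_le
  have hcardu : Fintype.card Fˣ = q - 1 := by
    rw [Fintype.card_units, hF]
  let g : Fˣ ≃ Fin (q - 1) := Fintype.equivFinOfCardEq hcardu
  set α : Fin (q - 1) → F := fun i => ((g.symm i : Fˣ) : F) with hα
  have hαinj : Function.Injective α := fun a b hab => by
    apply g.symm.injective; exact Units.ext hab
  have hα0 : ∀ i, α i ≠ 0 := fun i => Units.ne_zero _
  -- sums of powers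
  have Ssum : ∀ k : ℕ, 0 < k → k < q - 1 → ∑ i, α i ^ k = 0 := by
    intro k hk0 hk1
    have h1 : ∑ i, α i ^ k = ∑ x : Fˣ, ((x : F)) ^ k := Equiv.sum_comp g.symm (fun u => ((u : Fˣ) : F) ^ k)
    rw [h1]
    have := FiniteField.sum_pow_units F k
    rw [hF] at this
    rw [this, if_neg]
    intro hdvd
    exact absurd (Nat.le_of_dvd hk0 hdvd) (not_le.mpr hk1)
  have hμn : μ ≤ q - 1 := by omega
  -- generators
  set e : Fin μ → (Fin (q - 1) → F) := fun j i => α i ^ ((j : ℕ) + 1) with he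
  set C : Submodule F (Fin (q - 1) → F) := Submodule.span F (Set.range e) with hC
  have heC : ∀ j, e j ∈ C := fun j => Submodule.subset_span (Set.mem_range_self j)
  -- orthogonality of the generators
  have horth : ∀ j k : Fin μ, ∑ i, e j i * e k i = 0 := by
    intro j k
    have : ∀ i, e j i * e k i = α i ^ (((j : ℕ) + 1) + ((k : ℕ) + 1)) := by
      intro i; rw [he]; dsimp only; rw [← pow_add]
    simp_rw [this]
    exact Ssum _ (by omega) (by have := j.2; have := k.2; omega)
  have hEC : ∀ j : Fin μ, ∀ c ∈ C, ∑ i, e j i * c i = 0 := by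
    intro j c hc
    have hle : C ≤ LinearMap.ker (my_lin (e j)) := by
      rw [hC, Submodule.span_le]
      rintro _ ⟨k, rfl⟩
      exact horth j k
    exact hle hc
  have hCC : ∀ v ∈ C, ∀ c ∈ C, ∑ i, v i * c i = 0 := by
    intro v hv c hc
    have hle : C ≤ LinearMap.ker (my_lin c) := by
      rw [hC, Submodule.span_le]
      rintro _ ⟨j, rfl⟩
      show ∑ i, c i * e j i = 0
      rw [← hEC j c hc]
      exact Finset.sum_congr rfl fun i _ => mul_comm _ _
    have : my_lin c v = 0 := hle hv
    rw [← this]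
    exact Finset.sum_congr rfl fun i _ => mul_comm _ _
  -- linear independence and rank
  have hli : LinearIndependent F e := by
    rw [Fintype.linearIndependent_iff]
    intro cf hcf
    have key : ∀ i : Fin μ, ∑ j : Fin μ, cf j * (α (Fin.castLE hμn i)) ^ ((j : ℕ) + 1) = 0 := by
      intro i
      have := congrFun hcf (Fin.castLE hμn i)
      simpa [he, Finset.sum_apply] using this
    have : cf = 0 := my_aux_cols (fun a b hab => (Fin.castLE_injective hμn) (hαinj hab))
      (fun i => hα0 _) key
    exact fun i => congrFun this i
  have hrank : Module.finrank F C = μ := by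
    rw [hC, finrank_span_eq_card hli, Fintype.card_fin]
  refine ⟨C, hrank, hCC, ?_, ?_⟩
  · -- membership : exists vector of weight μ + 1
    set d := q - 1 - (μ + 1) with hdd
    have hμ1 : μ + 1 ≤ q - 1 := by omega
    have hdle : d ≤ q - 1 := by omega
    set T : Finset (Fin (q - 1)) := Finset.univ.map (Fin.castLEEmb hdle) with hT
    have hTmem : ∀ i : Fin (q - 1), i ∈ T ↔ (i : ℕ) < d := by
      intro i
      simp only [hT, Finset.mem_map, Finset.mem_univ, true_and]
      constructor
      · rintro ⟨a, rfl⟩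
        simp [Fin.castLEEmb]
      · intro h
        exact ⟨⟨(i : ℕ), h⟩, by ext; simp [Fin.castLEEmb]⟩
    have hTcard : T.card = d := by simp [hT]
    set p : Polynomial F := ∏ t ∈ T, (Polynomial.X - Polynomial.C (α t)) with hp
    have hpdeg : p.natDegree = d := by
      rw [hp, Polynomial.natDegree_prod_of_monic _ _ (fun t _ => Polynomial.monic_X_sub_C _)]
      simp [Polynomial.natDegree_X_sub_C, hTcard]
    set v0 : Fin (q - 1) → F := fun i => p.eval (α i) with hv0
    have hzero : ∀ i, v0 i = 0 ↔ i ∈ T := by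
      intro i
      rw [hv0]; dsimp only
      rw [hp, Polynomial.eval_prod, Finset.prod_eq_zero_iff]
      constructor
      · rintro ⟨t, ht, hzt⟩
        simp only [Polynomial.eval_sub, Polynomial.eval_X, Polynomial.eval_C,
          sub_eq_zero] at hzt
        rwa [hαinj hzt]
      · intro hiT; exact ⟨i, hiT, by simp⟩
    have hnorm : hammingNorm v0 = μ + 1 := by
      have hflt : Finset.filter (fun i => v0 i ≠ 0) Finset.univ = Tᶜ := by
        ext i; simp [hzero i]
      show (Finset.filter (fun i => v0 i ≠ 0) Finset.univ).card = μ + 1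
      rw [hflt, Finset.card_compl, hTcard, Fintype.card_fin]
      omega
    have hne : v0 ≠ 0 := by
      intro h
      rw [h, hammingNorm_zero] at hnorm
      exact Nat.succ_ne_zero μ hnorm.symm
    have hple : ∀ j : Fin μ, ∑ i, v0 i * e j i = 0 := by
      intro j
      have hev : ∀ x : F, p.eval x = ∑ k ∈ Finset.range (d + 1), p.coeff k * x ^ k :=
        fun x => Polynomial.eval_eq_sum_range' (by rw [hpdeg]; omega) x
      calc ∑ i, v0 i * e j i
          = ∑ i, ∑ k ∈ Finset.range (d + 1), p.coeff k * α i ^ (k + ((j : ℕ) + 1)) := by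
            refine Finset.sum_congr rfl fun i _ => ?_
            rw [hv0]; dsimp only; rw [hev, Finset.sum_mul]
            refine Finset.sum_congr rfl fun k _ => ?_
            rw [he]; dsimp only; rw [mul_assoc, ← pow_add]
        _ = ∑ k ∈ Finset.range (d + 1), p.coeff k * ∑ i, α i ^ (k + ((j : ℕ) + 1)) := by
            rw [Finset.sum_comm]
            exact Finset.sum_congr rfl fun k _ => (Finset.mul_sum _ _ _).symm
        _ = 0 := by
            refine Finset.sum_eq_zero fun k hk => ?_
            have hk' := Finset.mem_range.mp hk
            have hj := j.2
            rw [Ssum _ (by omega) (by omega), mul_zero]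
    have horthv0 : ∀ c ∈ C, ∑ i, v0 i * c i = 0 := by
      intro c hc
      have hle : C ≤ LinearMap.ker (my_lin v0) := by
        rw [hC, Submodule.span_le]
        rintro _ ⟨j, rfl⟩
        exact hple j
      exact hle hc
    exact ⟨v0, horthv0, hne, hnorm⟩
  · -- lower bound
    rintro w ⟨v, hvC, hv0, hvw⟩
    by_contra hlt
    push_neg at hlt
    have hwμ : hammingNorm v ≤ μ := by omega
    classical
    set s : Finset (Fin (q - 1)) := {i | v i ≠ 0} with hs
    have hscard : s.card = hammingNorm v := rfl
    have hsle : s.card ≤ μ := by rw [hscard]; exact hwμ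
    set gs := s.orderIsoOfFin rfl with hgs
    set β : Fin s.card → F := fun i' => α (gs i' : Fin (q - 1)) with hβ
    have hβinj : Function.Injective β := by
      intro a b hab
      have := hαinj hab
      exact (OrderIso.injective gs) (Subtype.ext this)
    have key : ∀ j' : Fin s.card, ∑ i', (v ((gs i' : s) : Fin (q - 1))) * β i' ^ ((j' : ℕ) + 1) = 0 := by
      intro j'
      have hcon := hvC (e (Fin.castLE hsle j')) (heC _)
      have h1 : ∑ i, v i * e (Fin.castLE hsle j') i = ∑ i ∈ s, v i * α i ^ ((j' : ℕ) + 1) := by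
        rw [he]
        refine (Finset.sum_subset s.subset_univ ?_).symm
        intro i _ hi
        have : v i = 0 := by
          by_contra hne
          exact hi (by simp [hs, hne])
        simp [this]
      have h2 : ∑ i ∈ s, v i * α i ^ ((j' : ℕ) + 1)
          = ∑ i' : Fin s.card, v ((gs i' : s) : Fin (q - 1)) * β i' ^ ((j' : ℕ) + 1) := by
        rw [← Finset.sum_attach s (fun i => v i * α i ^ ((j' : ℕ) + 1))]
        exact (Equiv.sum_comp gs.toEquiv (fun x : s => v (x : Fin (q - 1)) * α (x : Fin (q - 1)) ^ ((j' : ℕ) + 1))).symm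
      rw [← h2, ← h1]
      exact hcon
    have hzero : (fun i' : Fin s.card => v ((gs i' : s) : Fin (q - 1))) = 0 :=
      my_aux_rows hβinj (fun i => hα0 _) key
    obtain ⟨i, hi⟩ : ∃ i, v i ≠ 0 := by
      by_contra h; push_neg at h; exact hv0 (funext fun i => h i)
    have his : i ∈ s := by simp [hs, hi]
    have := congrFun hzero (gs.symm ⟨i, his⟩)
    simp at this
    exact hi this
end

section
/- Let q be a prime power, F a finite field with exactly q² elements, and μ an integer with 0 ≤ μ ≤ q−2. Then there exists an F-linear code C ⊆ F^{q²} with dim_F C = μ+1 such that C ⊆ C∗ with respect to the Hermitian inner product and the minimum Hamming weight of the nonzero vectors of the Hermitian dual C∗ equals μ+2. -/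
open Matrix Finset

set_option linter.unusedSectionVars false

section Aux
variable {F : Type*} [Field F] [DecidableEq F]

lemma aux_vand_det_ne {m : ℕ} {z : Fin m → F} (hz : Function.Injective z) :
    (Matrix.vandermonde z).det ≠ 0 := by
  rw [Matrix.det_vandermonde]
  refine Finset.prod_ne_zero_iff.2 fun i _ => Finset.prod_ne_zero_iff.2 fun j hj => ?_
  rw [Finset.mem_Ioi] at hj
  exact sub_ne_zero.2 fun h => hj.ne' (hz h)

lemma aux_vand_row_zero {m : ℕ} {z : Fin m → F} (hz : Function.Injective z)
    {w : Fin m → F} (h : ∀ j : Fin m, ∑ k, w k * z k ^ (j : ℕ) = 0) : w = 0 := by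
  apply Matrix.eq_zero_of_mulVec_eq_zero (M := (Matrix.vandermonde z)ᵀ)
  · rw [Matrix.det_transpose]; exact aux_vand_det_ne hz
  · funext j
    simpa [Matrix.mulVec, Matrix.vandermonde, dotProduct, mul_comm] using h j

lemma aux_vand_col_zero {m : ℕ} {z : Fin m → F} (hz : Function.Injective z)
    {c : Fin m → F} (h : ∀ k : Fin m, ∑ j, c j * z k ^ (j : ℕ) = 0) : c = 0 := by
  apply Matrix.eq_zero_of_mulVec_eq_zero (M := Matrix.vandermonde z) (aux_vand_det_ne hz)
  funext k
  simpa [Matrix.mulVec, Matrix.vandermonde, dotProduct, mul_comm] using h k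

lemma aux_vand_exists {m : ℕ} {z : Fin m → F} (hz : Function.Injective z) (d : Fin m → F) :
    ∃ w : Fin m → F, ∀ j : Fin m, ∑ k, w k * z k ^ (j : ℕ) = d j := by
  have hdet : IsUnit ((Matrix.vandermonde z)ᵀ) := by
    rw [Matrix.isUnit_iff_isUnit_det, Matrix.det_transpose]
    exact (aux_vand_det_ne hz).isUnit
  obtain ⟨w, hw⟩ := Matrix.mulVec_surjective_iff_isUnit.2 hdet d
  refine ⟨w, fun j => ?_⟩
  have := congrFun hw j
  simpa [Matrix.mulVec, Matrix.vandermonde, dotProduct, mul_comm] using this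

end Aux

/-- Theorem 5' (classical ingredient for `𝒟^(q²,μ) = QECC(q², q²-2μ-2, μ+2, q)`):
for a finite field `F` with `q²` elements and `0 ≤ μ ≤ q - 2`, there exists an
`F`-linear code `C ⊆ F^(q²)` of dimension `μ + 1` which is contained in its
Hermitian dual `C∗` (with respect to `v ∗ w = ∑ i, v i * (w i)^q`), such that
the minimum Hamming weight of the nonzero vectors of `C∗` equals `μ + 2`. -/
theorem exists_hermitian_self_orthogonal_mds_full_length
    (q : ℕ) (hq : IsPrimePow q)
    (F : Type*) [Field F] [Fintype F] [DecidableEq F] (hF : Fintype.card F = q ^ 2)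
    (μ : ℕ) (hμ : μ ≤ q - 2) :
    ∃ C : Submodule F (Fin (q ^ 2) → F),
      Module.finrank F C = μ + 1 ∧
      (∀ v ∈ C, ∀ c ∈ C, ∑ i, v i * (c i) ^ q = 0) ∧
      IsLeast {w : ℕ | ∃ v : Fin (q ^ 2) → F,
        (∀ c ∈ C, ∑ i, v i * (c i) ^ q = 0) ∧ v ≠ 0 ∧ hammingNorm v = w} (μ + 2) := by
  classical
  obtain ⟨p, n, hpp, hn, hqpn⟩ := hq
  have hp : p.Prime := Nat.prime_iff.mpr hpp
  haveI : Fact p.Prime := ⟨hp⟩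
  have hq2 : 2 ≤ q := by
    calc 2 ≤ p := hp.two_le
    _ ≤ p ^ n := Nat.le_self_pow hn.ne' p
    _ = q := hqpn
  have hμq : μ + 2 ≤ q := by omega
  have hqq2 : q ≤ q ^ 2 := by nlinarith
  -- characteristic
  have hcharP : CharP F p := by
    haveI : CharP F (ringChar F) := ringChar.charP F
    obtain ⟨k, hrp, hk⟩ := FiniteField.card F (ringChar F)
    have hpr : p = ringChar F := by
      have hdvd : p ∣ (ringChar F) ^ (k : ℕ) := by
        rw [← hk, hF, ← hqpn, ← pow_mul]
        exact dvd_pow_self p (by positivity)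
      exact (Nat.prime_dvd_prime_iff_eq hp hrp).mp (hp.dvd_of_dvd_pow hdvd)
    rw [hpr]; exact ringChar.charP F
  haveI := hcharP
  have hadd : ∀ a b : F, (a + b) ^ q = a ^ q + b ^ q := by
    intro a b; rw [← hqpn]; exact add_pow_char_pow ..
  have hq0 : q ≠ 0 := by omega
  have hfrob_inj : Function.Injective (fun y : F => y ^ q) := by
    intro a b hab
    have h1 : (a - b) ^ q = 0 := by
      rw [← hqpn, sub_pow_char_pow, hqpn]
      simpa [sub_eq_zero] using hab
    exact sub_eq_zero.mp (pow_eq_zero_iff hq0 |>.mp h1)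
  -- enumeration of F
  set e : Fin (q ^ 2) ≃ F := (Fintype.equivFinOfCardEq hF).symm with he
  set x : Fin (q ^ 2) → F := fun i => e i ^ q with hxdef
  have hx_inj : Function.Injective x := fun i j h => e.injective (hfrob_inj h)
  -- generators
  set g : Fin (μ + 1) → Fin (q ^ 2) → F := fun j i => e i ^ (j : ℕ) with hg
  set C : Submodule F (Fin (q ^ 2) → F) := Submodule.span F (Set.range g) with hC
  -- power sums vanish
  have hpow_sum : ∀ k : ℕ, k < q ^ 2 - 1 → ∑ i : Fin (q ^ 2), e i ^ k = 0 := by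
    intro k hk
    have h1 : ∑ y : F, y ^ k = 0 := FiniteField.sum_pow_lt_card_sub_one F k (by rwa [hF])
    rw [← h1]
    exact Fintype.sum_equiv e _ _ fun i => rfl
  -- generator orthogonality
  have hgen : ∀ j k : ℕ, j ≤ μ → k ≤ μ →
      ∑ i : Fin (q ^ 2), e i ^ j * (e i ^ k) ^ q = 0 := by
    intro j k hj hk
    have h1 : ∀ i : Fin (q ^ 2), e i ^ j * (e i ^ k) ^ q = e i ^ (j + k * q) := by
      intro i; rw [← pow_mul, ← pow_add]
    rw [Finset.sum_congr rfl fun i _ => h1 i]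
    apply hpow_sum
    have hb : j + k * q + 1 < q * q := by nlinarith
    have hsq : q ^ 2 = q * q := sq q
    omega
  -- reduction to generators for the dual condition
  have hdual_of_gen : ∀ v : Fin (q ^ 2) → F,
      (∀ j : Fin (μ + 1), ∑ i, v i * (g j i) ^ q = 0) →
      ∀ c ∈ C, ∑ i, v i * (c i) ^ q = 0 := by
    intro v hvg c hc
    induction hc using Submodule.span_induction with
    | mem c hcmem => obtain ⟨j, rfl⟩ := hcmem; exact hvg j
    | zero => simp [zero_pow hq0]
    | add a b _ _ ha hb =>
        have : ∀ i, v i * ((a + b) i) ^ q = v i * (a i) ^ q + v i * (b i) ^ q := by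
          intro i; rw [Pi.add_apply, hadd, mul_add]
        rw [Finset.sum_congr rfl fun i _ => this i, Finset.sum_add_distrib, ha, hb, add_zero]
    | smul r a _ ha =>
        have : ∀ i, v i * ((r • a) i) ^ q = r ^ q * (v i * (a i) ^ q) := by
          intro i; rw [Pi.smul_apply, smul_eq_mul, mul_pow]; ring
        rw [Finset.sum_congr rfl fun i _ => this i, ← Finset.mul_sum, ha, mul_zero]
  have hgmem : ∀ j : Fin (μ + 1), g j ∈ C := fun j => Submodule.subset_span ⟨j, rfl⟩
  -- the key identity (g j i) ^ q = x i ^ j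
  have hgq : ∀ (j : Fin (μ + 1)) (i : Fin (q ^ 2)), (g j i) ^ q = x i ^ (j : ℕ) := by
    intro j i; rw [hg, hxdef]; exact pow_right_comm _ _ _
  -- finrank
  have hμ1le : μ + 1 ≤ q ^ 2 := by omega
  have hli : LinearIndependent F g := by
    rw [Fintype.linearIndependent_iff]
    intro c hc
    set z1 : Fin (μ + 1) → F := fun k => e (Fin.castLE hμ1le k) with hz1
    have hz1inj : Function.Injective z1 :=
      fun a b h => Fin.castLE_injective hμ1le (e.injective h)
    have hcf : ∀ k : Fin (μ + 1), ∑ j : Fin (μ + 1), c j * z1 k ^ (j : ℕ) = 0 := by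
      intro k
      have := congrFun hc (Fin.castLE hμ1le k)
      simpa [Finset.sum_apply, hg, hz1] using this
    exact fun j => congrFun (aux_vand_col_zero hz1inj hcf) j
  have hrank : Module.finrank F C = μ + 1 := by
    rw [hC, finrank_span_eq_card hli, Fintype.card_fin]
  -- self-orthogonality
  have horth : ∀ v ∈ C, ∀ c ∈ C, ∑ i, v i * (c i) ^ q = 0 := by
    intro v hv
    induction hv using Submodule.span_induction with
    | mem v hvmem =>
        obtain ⟨j, rfl⟩ := hvmem
        refine hdual_of_gen _ fun k => ?_
        exact hgen (j : ℕ) (k : ℕ) (by omega) (by omega)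
    | zero => intro c _; simp
    | add a b _ _ ha hb =>
        intro c hc
        have : ∀ i, (a + b) i * (c i) ^ q = a i * (c i) ^ q + b i * (c i) ^ q := by
          intro i; rw [Pi.add_apply, add_mul]
        rw [Finset.sum_congr rfl fun i _ => this i, Finset.sum_add_distrib, ha c hc, hb c hc,
          add_zero]
    | smul r a _ ha =>
        intro c hc
        have : ∀ i, (r • a) i * (c i) ^ q = r * (a i * (c i) ^ q) := by
          intro i; rw [Pi.smul_apply, smul_eq_mul, mul_assoc]
        rw [Finset.sum_congr rfl fun i _ => this i, ← Finset.mul_sum, ha c hc, mul_zero]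
  -- lower bound on weights of nonzero dual vectors
  have hlb : ∀ v : Fin (q ^ 2) → F, (∀ c ∈ C, ∑ i, v i * (c i) ^ q = 0) → v ≠ 0 →
      μ + 2 ≤ hammingNorm v := by
    intro v hv hv0
    by_contra hlt
    push_neg at hlt
    set s : Finset (Fin (q ^ 2)) := {i | v i ≠ 0} with hs
    have hnorm : hammingNorm v = s.card := rfl
    have hvmem : ∀ i, i ∈ s ↔ v i ≠ 0 := by intro i; simp [hs]
    have hcard : s.card ≤ μ + 1 := by omega
    set u := s.orderIsoOfFin (rfl : s.card = s.card) with hu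
    set z2 : Fin s.card → F := fun k => x (u k) with hz2
    have hz2inj : Function.Injective z2 := by
      intro a b h
      exact (OrderIso.injective u) (Subtype.ext (hx_inj h))
    set w : Fin s.card → F := fun k => v (u k) with hw
    have hvx : ∀ j : Fin (μ + 1), ∑ i, v i * x i ^ (j : ℕ) = 0 := by
      intro j
      have := hv (g j) (hgmem j)
      rw [Finset.sum_congr rfl fun i _ => by rw [hgq j i]] at this
      exact this
    have hcond : ∀ j : Fin s.card, ∑ k, w k * z2 k ^ (j : ℕ) = 0 := by
      intro j
      have hj : (j : ℕ) < μ + 1 := by omega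
      have h1 := hvx ⟨(j : ℕ), hj⟩
      have h2 : ∑ i ∈ s, v i * x i ^ (j : ℕ) = 0 := by
        rw [← h1]
        exact Finset.sum_subset (Finset.subset_univ s)
          (fun i _ hi => by
            have : v i = 0 := by by_contra h; exact hi ((hvmem i).mpr h)
            rw [this, zero_mul])
      have e1 : ∑ k, w k * z2 k ^ (j : ℕ) =
          ∑ a : {i // i ∈ s}, v (a : Fin (q ^ 2)) * x (a : Fin (q ^ 2)) ^ (j : ℕ) :=
        Fintype.sum_equiv u.toEquiv _ _ fun k => rfl
      rw [e1, Finset.sum_coe_sort s (fun i => v i * x i ^ (j : ℕ)), h2]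
    have hwz := aux_vand_row_zero hz2inj hcond
    apply hv0
    funext i
    by_cases hi : v i = 0
    · exact hi
    · have him : i ∈ s := (hvmem i).mpr hi
      have : v (u (u.symm ⟨i, him⟩)) = 0 := congrFun hwz (u.symm ⟨i, him⟩)
      rw [OrderIso.apply_symm_apply] at this
      exact this
  -- construct a dual vector of weight μ + 2
  have hle : μ + 2 ≤ q ^ 2 := by omega
  set z : Fin (μ + 2) → F := fun k => x (Fin.castLE hle k) with hzdef
  have hzinj : Function.Injective z := fun a b h => Fin.castLE_injective hle (hx_inj h)
  obtain ⟨w, hw⟩ := aux_vand_exists hzinj (fun j => if j = Fin.last (μ + 1) then 1 else 0)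
  set v : Fin (q ^ 2) → F := fun i => if h : (i : ℕ) < μ + 2 then w ⟨i, h⟩ else 0 with hvdef
  have hveval : ∀ k : Fin (μ + 2), v (Fin.castLE hle k) = w k := by
    intro k
    have hk : ((Fin.castLE hle k : Fin (q ^ 2)) : ℕ) < μ + 2 := k.isLt
    rw [hvdef]
    simp only [dif_pos hk]
    congr 1
  have hsum : ∀ m : ℕ, ∑ i, v i * x i ^ m = ∑ k : Fin (μ + 2), w k * z k ^ m := by
    intro m
    have hvan : ∀ i ∈ (Finset.univ : Finset (Fin (q ^ 2))),
        i ∉ (Finset.univ : Finset (Fin (μ + 2))).map (Fin.castLEEmb hle) →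
        v i * x i ^ m = 0 := by
      intro i _ hi
      have hni : ¬ ((i : ℕ) < μ + 2) := by
        intro hlt2
        exact hi (Finset.mem_map.mpr ⟨⟨(i : ℕ), hlt2⟩, Finset.mem_univ _, Fin.ext rfl⟩)
      rw [hvdef]; simp [hni]
    rw [← Finset.sum_subset (Finset.subset_univ _) hvan, Finset.sum_map]
    refine Finset.sum_congr rfl fun k _ => ?_
    have h1 : (Fin.castLEEmb hle) k = Fin.castLE hle k := rfl
    rw [h1, hveval k, hzdef]
  have hgv : ∀ j : Fin (μ + 1), ∑ i, v i * (g j i) ^ q = 0 := by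
    intro j
    rw [Finset.sum_congr rfl fun i _ => by rw [hgq j i], hsum (j : ℕ)]
    have h2 := hw (Fin.castSucc j)
    simpa [Fin.coe_castSucc, (Fin.castSucc_lt_last j).ne] using h2
  have hwk : ∀ k, w k ≠ 0 := by
    intro k0 hk0
    have h1 : (fun k => w (k0.succAbove k)) = 0 := by
      apply aux_vand_row_zero (z := fun k => z (k0.succAbove k))
        (hzinj.comp Fin.succAbove_right_injective)
      intro j
      have h2 := hw (Fin.castSucc j)
      rw [Fin.sum_univ_succAbove
        (fun k => w k * z k ^ ((Fin.castSucc j : Fin (μ + 2)) : ℕ)) k0] at h2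
      rw [hk0, zero_mul, zero_add, if_neg (Fin.castSucc_lt_last j).ne] at h2
      simpa using h2
    have h2 := hw (Fin.last (μ + 1))
    rw [Fin.sum_univ_succAbove
      (fun k => w k * z k ^ ((Fin.last (μ + 1) : Fin (μ + 2)) : ℕ)) k0] at h2
    rw [hk0, zero_mul, zero_add, if_pos rfl] at h2
    have h3 : ∀ k, w (k0.succAbove k) = 0 := fun k => congrFun h1 k
    rw [Finset.sum_congr rfl fun k _ => by rw [h3 k, zero_mul]] at h2
    simp at h2
  have hsupp : ({i | v i ≠ 0} : Finset (Fin (q ^ 2))) =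
      Finset.univ.map (Fin.castLEEmb hle) := by
    ext i
    simp only [Finset.mem_filter, Finset.mem_univ, true_and, Finset.mem_map]
    constructor
    · intro hvi
      have hlt2 : (i : ℕ) < μ + 2 := by
        by_contra h
        rw [hvdef] at hvi; simp [h] at hvi
      exact ⟨⟨(i : ℕ), hlt2⟩, Fin.ext rfl⟩
    · rintro ⟨k, rfl⟩
      have h1 : (Fin.castLEEmb hle) k = Fin.castLE hle k := rfl
      rw [h1, hveval k]
      exact hwk k
  have hnorm : hammingNorm v = μ + 2 := by
    have h0 : hammingNorm v = ({i | v i ≠ 0} : Finset (Fin (q ^ 2))).card := rfl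
    rw [h0, hsupp, Finset.card_map, Finset.card_fin]
  have hv0 : v ≠ 0 := by
    intro h
    rw [h, hammingNorm_zero] at hnorm
    omega
  exact ⟨C, hrank, horth, ⟨v, hdual_of_gen v hgv, hv0, hnorm⟩,
    fun wn ⟨v', hv', hv0', hn'⟩ => hn' ▸ hlb v' hv' hv0'⟩
end

section
/- Let q be a prime power, F a finite field with exactly q² elements, and μ an integer with 0 ≤ μ ≤ q−2. Then there exists an F-linear code C ⊆ F^{q²−1} with dim_F C = μ such that C ⊆ C∗ with respect to the Hermitian inner product and the minimum Hamming weight of the nonzero vectors of the Hermitian dual C∗ equals μ+1. -/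
open Polynomial Finset


/-- Theorem 5' (classical ingredient for `𝒟_s^(q²,μ) = QECC(q²-1, q²-2μ-1, μ+1, q)`):
for a finite field `F` with `q²` elements and `0 ≤ μ ≤ q - 2`, there exists an
`F`-linear code `C ⊆ F^(q²-1)` of dimension `μ` which is contained in its
Hermitian dual `C∗` (with respect to `v ∗ w = ∑ i, v i * (w i)^q`), such that
the minimum Hamming weight of the nonzero vectors of `C∗` equals `μ + 1`. -/
theorem exists_hermitian_self_orthogonal_mds_shortened
    (q : ℕ) (hq : IsPrimePow q)
    (F : Type*) [Field F] [Fintype F] [DecidableEq F] (hF : Fintype.card F = q ^ 2)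
    (μ : ℕ) (hμ : μ ≤ q - 2) :
    ∃ C : Submodule F (Fin (q ^ 2 - 1) → F),
      Module.finrank F C = μ ∧
      (∀ v ∈ C, ∀ c ∈ C, ∑ i, v i * (c i) ^ q = 0) ∧
      IsLeast {w : ℕ | ∃ v : Fin (q ^ 2 - 1) → F,
        (∀ c ∈ C, ∑ i, v i * (c i) ^ q = 0) ∧ v ≠ 0 ∧ hammingNorm v = w} (μ + 1) := by

  classical
  -- basic arithmetic
  have hq2 : 2 ≤ q := hq.two_le
  have hμ2 : μ + 2 ≤ q := by omega
  set n : ℕ := q ^ 2 - 1 with hns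
  have hqq : (q : ℕ) ^ 2 = q * q := sq q
  have hnn : n + 1 = q * q := by
    rw [hns, ← hqq]
    have : 1 ≤ q ^ 2 := by nlinarith
    omega
  have hmulq : μ * q + 2 * q ≤ q * q := by
    have := Nat.mul_le_mul_right q hμ2; rw [add_mul] at this; exact this
  have hq_lt : q < q * q := by nlinarith
  have hμn : μ + 1 < n := by nlinarith
  have hnpos : 0 < n := by omega
  have hμqn : μ * q < n := by omega
  -- Frobenius
  have hfrob : ∀ a b : F, (a + b) ^ q = a ^ q + b ^ q := by
    obtain ⟨p, k, hp, hk, rfl⟩ := hq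
    have hp' : Fact p.Prime := ⟨hp.nat_prime⟩
    have hchar : CharP F p := by
      obtain ⟨p', hcp'⟩ := CharP.exists F
      have : CharP F p' := hcp'
      have hp'prime : p'.Prime := CharP.char_is_prime F p'
      obtain ⟨m, hm⟩ := FiniteField.card F p'
      have hdvd : p' ∣ (p ^ k) ^ 2 := by
        rw [← hF, hm.2]; exact dvd_pow_self p' m.ne_zero
      rw [← pow_mul] at hdvd
      have : p' = p := (Nat.prime_dvd_prime_iff_eq hp'prime hp.nat_prime).mp
        (hp'prime.dvd_of_dvd_pow hdvd)
      rwa [this] at hcp'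
    intro a b
    exact add_pow_char_pow a b p k
  -- the generator
  obtain ⟨gu, hgu⟩ := IsCyclic.exists_generator (α := Fˣ)
  have hcardu : Nat.card Fˣ = n := by
    rw [Nat.card_units, Nat.card_eq_fintype_card, hF]
  set g : F := (gu : F) with hg
  have hord : orderOf g = n := by
    rw [hg, orderOf_units, orderOf_eq_card_of_forall_mem_zpowers hgu, hcardu]
  have hg0 : g ≠ 0 := gu.ne_zero
  have hgn : g ^ n = 1 := by rw [← hord]; exact pow_orderOf_eq_one g
  have hgm : ∀ m : ℕ, 0 < m → m < n → g ^ m ≠ 1 := by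
    intro m h1 h2 hone
    have hdvd : n ∣ m := hord ▸ orderOf_dvd_of_pow_eq_one hone
    have := Nat.le_of_dvd h1 hdvd; omega
  set x : Fin n → F := fun i => g ^ (i : ℕ) with hx
  have hxinj : Function.Injective x := by
    intro i j hij
    exact Fin.ext (pow_injOn_Iio_orderOf (by rw [hord]; exact i.isLt)
      (by rw [hord]; exact j.isLt) hij)
  have hx0 : ∀ i, x i ≠ 0 := fun i => pow_ne_zero _ hg0
  have hxn : ∀ i, x i ^ n = 1 := by
    intro i; rw [hx]; simp only []
    rw [← pow_mul, mul_comm, pow_mul, hgn, one_pow]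
  have hgeom : ∀ m : ℕ, 0 < m → m < n → ∑ i : Fin n, x i ^ m = 0 := by
    intro m h1 h2
    have : ∀ i : Fin n, x i ^ m = (g ^ m) ^ (i : ℕ) := by
      intro i; rw [hx]; simp only []; rw [← pow_mul, mul_comm, pow_mul]
    simp_rw [this]
    rw [Fin.sum_univ_eq_sum_range (fun i => (g ^ m) ^ i) n,
      geom_sum_eq (hgm m h1 h2) n, ← pow_mul, mul_comm m n, pow_mul, hgn, one_pow,
      sub_self, zero_div]
  -- sum swapping
  have hswap : ∀ (v : Fin n → F) (N : ℕ) (p : F[X]), p.natDegree < N →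
      ∑ i : Fin n, v i * p.eval (x i)
        = ∑ m ∈ Finset.range N, p.coeff m * (∑ i : Fin n, v i * x i ^ m) := by
    intro v N p hp
    simp_rw [eval_eq_sum_range' hp, Finset.mul_sum]
    rw [Finset.sum_comm]
    refine Finset.sum_congr rfl fun m _ => ?_
    exact Finset.sum_congr rfl fun i _ => by ring
  -- key polynomial lemma for the lower bound
  have keyL : ∀ (v : Fin n → F), (∀ a : ℕ, 0 < a → a ≤ μ → ∑ i, v i * x i ^ a = 0) →
      ∀ p : F[X], p.coeff 0 = 0 → p.natDegree ≤ μ → ∑ i, v i * p.eval (x i) = 0 := by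
    intro v hv p h0 hd
    rw [hswap v (μ + 1) p (by omega)]
    refine Finset.sum_eq_zero fun m hm => ?_
    rcases Nat.eq_zero_or_pos m with rfl | hm1
    · rw [h0, zero_mul]
    · rw [hv m hm1 (by simp only [Finset.mem_range] at hm; omega), mul_zero]
  -- vanishing sums of evaluations
  have hsum_eval : ∀ p : F[X], p.coeff 0 = 0 → p.natDegree < n →
      ∑ i : Fin n, p.eval (x i) = 0 := by
    intro p h0 hd
    have := hswap (fun _ => 1) n p hd
    simp only [one_mul] at this
    rw [this]
    refine Finset.sum_eq_zero fun m hm => ?_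
    rcases Nat.eq_zero_or_pos m with rfl | hm1
    · rw [h0, zero_mul]
    · rw [hgeom m hm1 (Finset.mem_range.mp hm), mul_zero]
  -- the generating vectors
  set r : Fin μ → (Fin n → F) := fun a i => x i ^ (((a : ℕ) + 1) * q) with hr
  set C : Submodule F (Fin n → F) := Submodule.span F (Set.range r) with hC
  have hx_pow_q : ∀ (i : Fin n) (e : ℕ), (x i ^ (e * q)) ^ q = x i ^ e := by
    intro i e
    have h1 : e * q * q = e + e * n := by
      have : q * q = n + 1 := hnn.symm
      calc e * q * q = e * (q * q) := by ring
        _ = e * (n + 1) := by rw [this]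
        _ = e + e * n := by ring
    rw [← pow_mul, h1, pow_add, mul_comm e n, pow_mul, hxn, one_pow, mul_one]
  -- orthogonality of generators against the power vectors
  have horth : ∀ (b : Fin μ) (a : ℕ), 0 < a → a ≤ μ → ∑ i, r b i * x i ^ a = 0 := by
    intro b a ha0 haμ
    have hb1 : (b : ℕ) + 1 ≤ μ := b.isLt
    have hbq : ((b : ℕ) + 1) * q ≤ μ * q := Nat.mul_le_mul_right q hb1
    have hlt : ((b : ℕ) + 1) * q + a < n := by omega
    have : ∀ i : Fin n, r b i * x i ^ a = x i ^ (((b : ℕ) + 1) * q + a) := by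
      intro i; rw [hr]; simp only []; rw [pow_add]
    simp_rw [this]
    exact hgeom _ (by positivity) hlt
  -- membership in the dual is equivalent to orthogonality to the power vectors
  have hdual : ∀ v : Fin n → F,
      (∀ c ∈ C, ∑ i, v i * (c i) ^ q = 0) ↔
      (∀ a : ℕ, 0 < a → a ≤ μ → ∑ i, v i * x i ^ a = 0) := by
    intro v
    constructor
    · intro h a ha0 haμ
      set b : Fin μ := ⟨a - 1, by omega⟩ with hb
      have hrb : r b ∈ C := Submodule.subset_span ⟨b, rfl⟩
      have := h (r b) hrb
      have hab : ((b : ℕ) + 1) = a := by simp [hb]; omega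
      simp only [hr] at this
      rw [← hab]
      simpa [hx_pow_q] using this
    · intro hv c hc
      refine Submodule.span_induction ?_ ?_ ?_ ?_ hc
      · rintro c ⟨b, rfl⟩
        simp only [hr]
        have : ∀ i : Fin n, v i * (x i ^ (((b : ℕ) + 1) * q)) ^ q
            = v i * x i ^ ((b : ℕ) + 1) := by
          intro i; rw [hx_pow_q]
        rw [Finset.sum_congr rfl fun i _ => this i]
        exact hv ((b : ℕ) + 1) (by omega) b.isLt
      · simp [zero_pow (by omega : q ≠ 0)]
      · intro c d _ _ hcd hdd
        have : ∀ i : Fin n, v i * ((c + d) i) ^ q = v i * (c i) ^ q + v i * (d i) ^ q := by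
          intro i
          simp only [Pi.add_apply, hfrob (c i) (d i), mul_add]
        rw [Finset.sum_congr rfl fun i _ => this i, Finset.sum_add_distrib, hcd, hdd, add_zero]
      · intro t c _ hcc
        have : ∀ i : Fin n, v i * ((t • c) i) ^ q = t ^ q * (v i * (c i) ^ q) := by
          intro i; simp only [Pi.smul_apply, smul_eq_mul, mul_pow]; ring
        rw [Finset.sum_congr rfl fun i _ => this i, ← Finset.mul_sum, hcc, mul_zero]
  -- linear independence
  have hli : LinearIndependent F r := by
    rw [Fintype.linearIndependent_iff]
    intro c hc b
    set P : F[X] := ∑ a : Fin μ, Polynomial.C (c a) * X ^ (((a : ℕ) + 1) * q) with hP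
    have hPdeg : P.natDegree < Fintype.card (Fin n) := by
      rw [Fintype.card_fin]
      refine lt_of_le_of_lt (natDegree_sum_le_of_forall_le _ _ (fun a _ => ?_)) hμqn
      refine (natDegree_C_mul_le _ _).trans ?_
      rw [natDegree_X_pow]
      exact Nat.mul_le_mul_right q a.isLt
    have hPeval : ∀ i : Fin n, P.eval (x i) = 0 := by
      intro i
      have := congrFun hc i
      simp only [Finset.sum_apply, Pi.smul_apply, smul_eq_mul, Pi.zero_apply, hr] at this
      simp only [hP, eval_finset_sum, eval_mul, eval_C, eval_pow, eval_X]
      exact this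
    have hP0 : P = 0 :=
      Polynomial.eq_zero_of_natDegree_lt_card_of_eval_eq_zero P hxinj hPeval hPdeg
    have := congrArg (fun p : F[X] => p.coeff (((b : ℕ) + 1) * q)) hP0
    simp only [hP, finset_sum_coeff, coeff_C_mul, coeff_X_pow, coeff_zero] at this
    rw [Finset.sum_eq_single b] at this
    · simpa using this
    · intro a _ hab
      have hne : ¬ (((b : ℕ) + 1) * q = ((a : ℕ) + 1) * q) := by
        intro h
        have := Nat.eq_of_mul_eq_mul_right (by omega : 0 < q) h
        exact hab (Fin.ext (by omega))
      simp [hne]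
    · intro h; exact absurd (Finset.mem_univ b) h
  refine ⟨C, ?_, ?_, ?_, ?_⟩
  · rw [hC, finrank_span_eq_card hli, Fintype.card_fin]
  · -- self-orthogonality
    intro v hv c hc
    refine (hdual v).mpr ?_ c hc
    clear hc c
    refine Submodule.span_induction ?_ ?_ ?_ ?_ hv
    · rintro v ⟨b, rfl⟩; exact horth b
    · intro a _ _; simp
    · intro v w _ _ hvv hww a ha0 haμ
      have : ∀ i : Fin n, (v + w) i * x i ^ a = v i * x i ^ a + w i * x i ^ a := by
        intro i; simp [add_mul]
      rw [Finset.sum_congr rfl fun i _ => this i, Finset.sum_add_distrib,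
        hvv a ha0 haμ, hww a ha0 haμ, add_zero]
    · intro t v _ hvv a ha0 haμ
      have : ∀ i : Fin n, (t • v) i * x i ^ a = t * (v i * x i ^ a) := by
        intro i; simp [mul_assoc]
      rw [Finset.sum_congr rfl fun i _ => this i, ← Finset.mul_sum, hvv a ha0 haμ, mul_zero]
  · -- the weight μ+1 vector
    set T : Finset (Fin n) := Finset.univ.filter (fun j : Fin n => μ < (j : ℕ)) with hT
    have hTcc : (Finset.univ.filter (fun j : Fin n => ¬ μ < (j : ℕ))).card = μ + 1 := by
      have himg : Finset.univ.filter (fun j : Fin n => ¬ μ < (j : ℕ))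
          = Finset.image (Fin.castLE (le_of_lt hμn)) Finset.univ := by
        ext j
        simp only [Finset.mem_filter, Finset.mem_univ, true_and, Finset.mem_image, not_lt]
        constructor
        · intro hj
          exact ⟨⟨(j : ℕ), by omega⟩, Fin.ext rfl⟩
        · rintro ⟨k, rfl⟩
          have := k.isLt
          simp [Fin.castLE]
          omega
      rw [himg, Finset.card_image_of_injective _ (Fin.castLE_injective _),
        Finset.card_univ, Fintype.card_fin]
    have hTcard : T.card + (μ + 1) = n := by
      rw [hT]
      have := Finset.card_filter_add_card_filter_not
        (s := (Finset.univ : Finset (Fin n))) (p := fun j : Fin n => μ < (j : ℕ))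
      rw [Finset.card_univ, Fintype.card_fin] at this
      omega
    set p0 : F[X] := ∏ j ∈ T, (X - Polynomial.C (x j)) with hp0
    have hmon0 : p0.Monic := monic_prod_of_monic _ _ (fun j _ => monic_X_sub_C (x j))
    have hdeg0 : p0.natDegree = T.card := by
      rw [hp0, natDegree_prod_of_monic _ _ (fun j _ => monic_X_sub_C (x j))]
      simp [natDegree_X_sub_C]
    set v : Fin n → F := fun i => p0.eval (x i) with hv
    have heval : ∀ i : Fin n, v i = ∏ j ∈ T, (x i - x j) := by
      intro i; simp [hv, hp0, eval_prod]
    have hvne : ∀ i : Fin n, v i ≠ 0 ↔ ¬ μ < (i : ℕ) := by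
      intro i
      rw [heval i]
      constructor
      · intro hne hi
        exact hne (Finset.prod_eq_zero (i := i) (by simp [hT, hi]) (sub_self _))
      · intro hi h0
        obtain ⟨j, hjT, hj0⟩ := Finset.prod_eq_zero_iff.mp h0
        rw [sub_eq_zero] at hj0
        have := hxinj hj0
        subst this
        exact hi (by simpa [hT] using hjT)
    refine ⟨v, ?_, ?_, ?_⟩
    · refine (hdual v).mpr ?_
      intro a ha0 haμ
      have hsum : ∑ i, v i * x i ^ a = ∑ i : Fin n, (p0 * X ^ a).eval (x i) := by
        refine Finset.sum_congr rfl fun i _ => ?_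
        simp only [hv, eval_mul, eval_pow, eval_X]
      rw [hsum]
      refine hsum_eval _ ?_ ?_
      · rw [mul_coeff_zero, coeff_X_pow, if_neg (by omega : ¬ (0 = a)), mul_zero]
      · rw [natDegree_mul hmon0.ne_zero (pow_ne_zero a X_ne_zero), natDegree_X_pow, hdeg0]
        omega
    · intro hv0
      have : v ⟨0, hnpos⟩ = 0 := by rw [hv0]; rfl
      exact ((hvne ⟨0, hnpos⟩).mpr (by simp)) this
    · have : hammingNorm v = (Finset.univ.filter (fun i : Fin n => v i ≠ 0)).card := rfl
      rw [this, show (Finset.univ.filter (fun i : Fin n => v i ≠ 0))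
          = Finset.univ.filter (fun j : Fin n => ¬ μ < (j : ℕ)) from
        Finset.filter_congr (fun i _ => (hvne i)), hTcc]
  · -- the lower bound
    rintro w ⟨v, h1, h2, rfl⟩
    by_contra hcon
    push_neg at hcon
    have hnorm : hammingNorm v ≤ μ := by omega
    set S : Finset (Fin n) := Finset.univ.filter (fun i => v i ≠ 0) with hS
    have hScard : S.card = hammingNorm v := rfl
    obtain ⟨i0, hi0⟩ : ∃ i0, v i0 ≠ 0 := Function.ne_iff.mp h2
    have hi0S : i0 ∈ S := by simp [hS, hi0]
    set p : F[X] := X * ∏ j ∈ S.erase i0, (X - Polynomial.C (x j)) with hp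
    have hmon : (∏ j ∈ S.erase i0, (X - Polynomial.C (x j))).Monic :=
      monic_prod_of_monic _ _ (fun j _ => monic_X_sub_C (x j))
    have hpc : p.coeff 0 = 0 := by
      rw [hp, mul_coeff_zero, coeff_X_zero, zero_mul]
    have hpd : p.natDegree ≤ μ := by
      rw [hp, natDegree_mul X_ne_zero hmon.ne_zero, natDegree_X,
        natDegree_prod_of_monic _ _ (fun j _ => monic_X_sub_C (x j))]
      simp only [natDegree_X_sub_C, Finset.sum_const, smul_eq_mul, mul_one]
      have := Finset.card_erase_of_mem hi0S
      have hS1 : 1 ≤ S.card := Finset.card_pos.mpr ⟨i0, hi0S⟩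
      omega
    have hzero : ∑ i, v i * p.eval (x i) = 0 := keyL v ((hdual v).mp h1) p hpc hpd
    have heval : ∀ i : Fin n, p.eval (x i) = x i * ∏ j ∈ S.erase i0, (x i - x j) := by
      intro i; simp [hp, eval_prod]
    have hsingle : ∑ i, v i * p.eval (x i) = v i0 * p.eval (x i0) := by
      refine Finset.sum_eq_single i0 (fun i _ hne => ?_) (fun h => absurd (Finset.mem_univ i0) h)
      by_cases hvi : v i = 0
      · rw [hvi, zero_mul]
      · have hiS : i ∈ S.erase i0 := by simp [hS, hvi, hne]
        rw [heval i, Finset.prod_eq_zero hiS (by rw [sub_self]), mul_zero, mul_zero]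
    have hne0 : v i0 * p.eval (x i0) ≠ 0 := by
      rw [heval i0]
      refine mul_ne_zero hi0 (mul_ne_zero (hx0 i0) ?_)
      rw [Finset.prod_ne_zero_iff]
      intro j hj
      rw [sub_ne_zero]
      exact fun h => (Finset.mem_erase.mp hj).1 (hxinj h.symm)
    rw [hsingle] at hzero
    exact hne0 hzero
end

section
/- Let q be a prime power, K a finite field with exactly q elements, and let n, d be integers with 3 ≤ n ≤ q, 1 ≤ d, and 2d ≤ n + 2. Then there exists a K-linear subspace D ⊆ K^n × K^n with dim_K D = 2(d−1) such that D is symplectic self-orthogonal and every nonzero element of the symplectic dual D∗ has symplectic weight at least d. -/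
/-- Auxiliary: given `m+1` distinct points in a field, there is a vector `u`
with all entries nonzero such that `∑ i, u i * x i ^ k = 0` for all `k < m`. -/
lemma exists_weights {K : Type*} [Field K] {m : ℕ} (x : Fin (m + 1) → K)
    (hx : Function.Injective x) :
    ∃ u : Fin (m + 1) → K, (∀ i, u i ≠ 0) ∧ ∀ k < m, ∑ i, u i * x i ^ k = 0 := by
  classical
  let L : (Fin (m + 1) → K) →ₗ[K] (Fin m → K) :=
    { toFun := fun u k => ∑ i, u i * x i ^ (k : ℕ)
      map_add' := fun u v => by
        funext k; simp [add_mul, Finset.sum_add_distrib]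
      map_smul' := fun c u => by
        funext k; simp [Finset.mul_sum, mul_assoc] }
  have hker : LinearMap.ker L ≠ ⊥ := by
    intro h
    have hinj : Function.Injective L := LinearMap.ker_eq_bot.mp h
    have hle := LinearMap.finrank_le_finrank_of_injective hinj
    simp only [Module.finrank_fin_fun] at hle
    omega
  obtain ⟨u, huL, hune⟩ := (Submodule.ne_bot_iff _).mp hker
  have hsum : ∀ k < m, ∑ i, u i * x i ^ k = 0 := by
    intro k hk
    have h1 := congrFun (LinearMap.mem_ker.mp huL) ⟨k, hk⟩
    simpa [L] using h1
  refine ⟨u, ?_, hsum⟩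
  intro i0 hi0
  have hinj2 : Function.Injective fun j : Fin m => x (i0.succAbove j) :=
    hx.comp (Fin.succAbove_right_injective)
  have h0 : (fun j : Fin m => u (i0.succAbove j)) = 0 := by
    apply Matrix.eq_zero_of_forall_pow_sum_mul_pow_eq_zero hinj2
    intro k
    have h1 := hsum k k.isLt
    rw [Fin.sum_univ_succAbove (fun i => u i * x i ^ (k : ℕ)) i0] at h1
    simpa [hi0] using h1
  apply hune
  funext i
  rcases eq_or_ne i i0 with rfl | hne
  · exact hi0
  · obtain ⟨j, rfl⟩ := Fin.exists_succAbove_eq hne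
    exact congrFun h0 j

/-- Main Theorem (first part): for every prime power `q` and all integers
`n, d` with `3 ≤ n ≤ q`, `1 ≤ d` and `2d ≤ n + 2`, there is a quantum MDS code
`QECC(n, n-2d+2, d, q)`, i.e. a symplectic self-orthogonal `K`-linear subspace
`D ⊆ K^n × K^n` of dimension `2(d-1)` (where `K` is the field with `q`
elements) such that every nonzero element of the symplectic dual `D∗` has
symplectic weight at least `d`. -/
theorem exists_quantum_mds_code_short_length
    (q : ℕ) (hq : IsPrimePow q)
    (K : Type*) [Field K] [Fintype K] (hK : Fintype.card K = q)
    (n d : ℕ) (hn3 : 3 ≤ n) (hnq : n ≤ q) (hd1 : 1 ≤ d) (hd : 2 * d ≤ n + 2) :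
    ∃ D : Submodule K ((Fin n → K) × (Fin n → K)),
      Module.finrank K D = 2 * (d - 1) ∧
      (∀ a ∈ D, ∀ b ∈ D, sympIP a b = 0) ∧
      (∀ a : (Fin n → K) × (Fin n → K),
        (∀ c ∈ D, sympIP a c = 0) → a ≠ 0 → d ≤ sympWeight a) := by
  classical
  obtain ⟨m, rfl⟩ : ∃ m, n = m + 1 := ⟨n - 1, by omega⟩
  obtain ⟨x⟩ : Nonempty (Fin (m + 1) ↪ K) :=
    Function.Embedding.nonempty_of_card_le (by rw [Fintype.card_fin, hK]; omega)
  have hxinj : Function.Injective x := x.injective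
  obtain ⟨u, hu0, husum⟩ := exists_weights (fun i => x i) hxinj
  -- key vanishing lemma
  have key : ∀ h : Polynomial K, h.degree < (m : WithBot ℕ) →
      ∑ i, u i * h.eval (x i) = 0 := by
    intro h hh
    have hnd : h.natDegree < m := by
      rcases eq_or_ne h 0 with rfl | h0
      · simp only [Polynomial.natDegree_zero]; omega
      · exact (Polynomial.natDegree_lt_iff_degree_lt h0).mpr hh
    have heval : ∀ i : Fin (m + 1),
        h.eval (x i) = ∑ k ∈ Finset.range m, h.coeff k * x i ^ k :=
      fun i => Polynomial.eval_eq_sum_range' hnd (x i)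
    calc ∑ i, u i * h.eval (x i)
        = ∑ i, ∑ k ∈ Finset.range m, h.coeff k * (u i * x i ^ k) := by
          refine Finset.sum_congr rfl fun i _ => ?_
          rw [heval i, Finset.mul_sum]
          exact Finset.sum_congr rfl fun k _ => by ring
      _ = ∑ k ∈ Finset.range m, h.coeff k * ∑ i, u i * x i ^ k := by
          rw [Finset.sum_comm]
          exact Finset.sum_congr rfl fun k _ => (Finset.mul_sum _ _ _).symm
      _ = 0 := Finset.sum_eq_zero fun k hk => by
          rw [husum k (Finset.mem_range.mp hk), mul_zero]
  -- degree bound for products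
  have hprod : ∀ f g : Polynomial K, f.degree < ((d - 1 : ℕ) : WithBot ℕ) →
      g.degree < ((d - 1 : ℕ) : WithBot ℕ) → (f * g).degree < (m : WithBot ℕ) := by
    intro f g hf hg
    rcases eq_or_ne (f * g) 0 with hfg | hfg
    · rw [hfg, Polynomial.degree_zero]
      exact_mod_cast WithBot.bot_lt_coe m
    · have hf0 : f ≠ 0 := fun h => hfg (by simp [h])
      have hg0 : g ≠ 0 := fun h => hfg (by simp [h])
      have h1 : f.natDegree < d - 1 := (Polynomial.natDegree_lt_iff_degree_lt hf0).mpr hf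
      have h2 : g.natDegree < d - 1 := (Polynomial.natDegree_lt_iff_degree_lt hg0).mpr hg
      rw [← Polynomial.natDegree_lt_iff_degree_lt hfg, Polynomial.natDegree_mul hf0 hg0]
      omega
  set p := Polynomial.degreeLT K (d - 1) with hpdef
  let E : Polynomial K →ₗ[K] (Fin (m + 1) → K) :=
    LinearMap.pi fun i => Polynomial.leval (x i)
  have hE : ∀ (f : Polynomial K) (i), E f i = f.eval (x i) := fun f i => rfl
  let mu : (Fin (m + 1) → K) →ₗ[K] (Fin (m + 1) → K) :=
    { toFun := fun v i => u i * v i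
      map_add' := fun v w => by funext i; simp [mul_add]
      map_smul' := fun c v => by funext i; simp [smul_eq_mul]; ring }
  have hmu : ∀ (v : Fin (m + 1) → K) (i), mu v i = u i * v i := fun v i => rfl
  let Φ : (p × p) →ₗ[K] (Fin (m + 1) → K) × (Fin (m + 1) → K) :=
    (E.comp p.subtype).prodMap ((mu.comp E).comp p.subtype)
  have hΦ : ∀ fg : p × p, Φ fg = (E (fg.1 : Polynomial K), mu (E (fg.2 : Polynomial K))) :=
    fun fg => rfl
  refine ⟨LinearMap.range Φ, ?_, ?_, ?_⟩
  · -- dimension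
    haveI : Module.Finite K p := Module.Finite.equiv (Polynomial.degreeLTEquiv K (d - 1)).symm
    have hEinj : ∀ f : p, E (f : Polynomial K) = 0 → (f : Polynomial K) = 0 := by
      intro f hf
      apply Polynomial.eq_zero_of_natDegree_lt_card_of_eval_eq_zero (f : Polynomial K) hxinj
      · intro i
        rw [← hE, hf]; rfl
      · rw [Fintype.card_fin]
        rcases eq_or_ne (f : Polynomial K) 0 with h0 | h0
        · simp only [h0, Polynomial.natDegree_zero]; omega
        · have hlt := (Polynomial.natDegree_lt_iff_degree_lt h0).mpr
            (Polynomial.mem_degreeLT.mp f.2)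
          omega
    have hΦinj : Function.Injective Φ := by
      rw [injective_iff_map_eq_zero]
      rintro ⟨f, g⟩ hfg
      have h1 : E (f : Polynomial K) = 0 := congrArg Prod.fst hfg
      have h2' : mu (E (g : Polynomial K)) = 0 := congrArg Prod.snd hfg
      have h2 : E (g : Polynomial K) = 0 := by
        funext i
        have h3 := congrFun h2' i
        rw [hmu] at h3
        have h4 := (mul_eq_zero.mp h3).resolve_left (hu0 i)
        simpa using h4
      exact Prod.ext (Subtype.ext (hEinj f h1)) (Subtype.ext (hEinj g h2))
    rw [LinearMap.finrank_range_of_inj hΦinj, Module.finrank_prod]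
    have hrk : Module.finrank K p = d - 1 := by
      rw [(Polynomial.degreeLTEquiv K (d - 1)).finrank_eq, Module.finrank_fin_fun]
    rw [hrk]; omega
  · -- self-orthogonality
    rintro a ⟨⟨f, g⟩, rfl⟩ b ⟨⟨f', g'⟩, rfl⟩
    have hfg : ((f : Polynomial K) * (g' : Polynomial K)
        - (f' : Polynomial K) * (g : Polynomial K)).degree < (m : WithBot ℕ) := by
      refine lt_of_le_of_lt (Polynomial.degree_sub_le _ _) ?_
      rw [max_lt_iff]
      exact ⟨hprod _ _ (Polynomial.mem_degreeLT.mp f.2) (Polynomial.mem_degreeLT.mp g'.2),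
             hprod _ _ (Polynomial.mem_degreeLT.mp f'.2) (Polynomial.mem_degreeLT.mp g.2)⟩
    have hk := key _ hfg
    rw [← hk]
    simp only [sympIP, hΦ]
    refine Finset.sum_congr rfl fun i _ => ?_
    rw [hE, hE, hmu, hmu, hE, hE]
    simp only [Polynomial.eval_sub, Polynomial.eval_mul]
    ring
  · -- dual distance
    intro a hdual hane
    by_contra hlt
    push_neg at hlt
    set S : Finset (Fin (m + 1)) := Finset.univ.filter (fun i => a.1 i ≠ 0 ∨ a.2 i ≠ 0)
      with hSdef
    have hwt : sympWeight a = S.card := by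
      rw [sympWeight, ← Set.ncard_coe_finset]
      congr 1
      ext i; simp [hSdef]
    have hScard : S.card < d := by rw [← hwt]; exact hlt
    have hoff : ∀ i, i ∉ S → a.1 i = 0 ∧ a.2 i = 0 := by
      intro i hi
      by_contra hcon
      apply hi
      simp only [hSdef, Finset.mem_filter, Finset.mem_univ, true_and]
      tauto
    have h1 : ∀ f : Polynomial K, f ∈ p →
        ∑ i, a.1 i * (u i * f.eval (x i)) = 0 := by
      intro f hf
      have hin := hdual (Φ (0, ⟨f, hf⟩)) ⟨_, rfl⟩
      simp only [sympIP, hΦ] at hin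
      rw [← hin]
      refine Finset.sum_congr rfl fun i _ => ?_
      rw [hmu, hE]
      have hz : E ((0 : p) : Polynomial K) i = 0 := by
        rw [hE]; simp
      rw [hz]
      ring
    have h2 : ∀ f : Polynomial K, f ∈ p →
        ∑ i, f.eval (x i) * a.2 i = 0 := by
      intro f hf
      have hin := hdual (Φ (⟨f, hf⟩, 0)) ⟨_, rfl⟩
      simp only [sympIP, hΦ] at hin
      have heq : ∑ i, (a.1 i * mu (E ((0 : p) : Polynomial K)) i
          - E (f : Polynomial K) i * a.2 i) = - ∑ i, f.eval (x i) * a.2 i := by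
        rw [← Finset.sum_neg_distrib]
        refine Finset.sum_congr rfl fun i _ => ?_
        rw [hmu, hE, hE]
        have hz : ((0 : p) : Polynomial K) = 0 := rfl
        rw [hz]
        simp
      rw [heq] at hin
      exact neg_eq_zero.mp hin
    have hzero : ∀ i0, a.1 i0 = 0 ∧ a.2 i0 = 0 := by
      intro i0
      by_cases hi0 : i0 ∈ S
      · set r : Fin (m + 1) → K := fun i => if i = i0 then 1 else 0 with hrdef
        set f := Lagrange.interpolate S (fun i => x i) r with hfdef
        have hfp : f ∈ p := by
          rw [hpdef, Polynomial.mem_degreeLT]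
          refine lt_of_lt_of_le (Lagrange.degree_interpolate_lt _ hxinj.injOn) ?_
          exact_mod_cast Nat.cast_le.mpr (by omega : S.card ≤ d - 1)
        have hfeval : ∀ i ∈ S, f.eval (x i) = r i := fun i hi =>
          Lagrange.eval_interpolate_at_node _ hxinj.injOn hi
        constructor
        · have hs := h1 f hfp
          rw [← Finset.sum_subset S.subset_univ
            (fun i _ hi => by rw [(hoff i hi).1, zero_mul])] at hs
          rw [Finset.sum_congr rfl (fun i hi => by rw [hfeval i hi])] at hs
          rw [Finset.sum_eq_single_of_mem i0 hi0
            (fun i _ hne => by rw [hrdef]; simp [hne])] at hs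
          rw [hrdef] at hs
          simp at hs
          tauto
        · have hs := h2 f hfp
          rw [← Finset.sum_subset S.subset_univ
            (fun i _ hi => by rw [(hoff i hi).2, mul_zero])] at hs
          rw [Finset.sum_congr rfl (fun i hi => by rw [hfeval i hi])] at hs
          rw [Finset.sum_eq_single_of_mem i0 hi0
            (fun i _ hne => by rw [hrdef]; simp [hne])] at hs
          rw [hrdef] at hs
          simpa using hs
      · exact hoff i0 hi0
    exact hane (Prod.ext (funext fun i => (hzero i).1) (funext fun i => (hzero i).2))
end
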